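/- arXiv:2602.17305 — 3 statements merged into one kernel-verified Lean document; each statement's English description precedes it below -/
import Mathlib

section
/- Let (X, 𝒜, π) be a probability space and let T be a Markov transition kernel on X that preserves π, i.e. the pushforward measure πT (defined by (πT)(A) = ∫ T(x,A) π(dx)) equals π. Let 1 ≤ p ≤ q be real numbers. Assume the hyper-contractivity estimate: for every nonnegative measurable g ∈ L^p(π), the function Tg(x) = ∫ g(y) T(x,dy) satisfies ‖Tg‖_{L^q(π)} ≤ ‖g‖_{L^p(π)}. Then for every probability measure μ on X, the Kullback–Leibler divergence satisfies H(μT | π) ≤ (p/q) · H(μ | π), where μT is the measure (μT)(A) = ∫ T(x,A) μ(dx). -/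
open MeasureTheory ProbabilityTheory ENNReal Classical

section All
variable {X : Type*} [MeasurableSpace X]


section Aux

lemma my_isProb_bind (μ : Measure X) [IsProbabilityMeasure μ]
    (T : Kernel X X) [IsMarkovKernel T] : IsProbabilityMeasure (μ.bind (fun x => T x)) := by
  constructor
  rw [Measure.bind_apply MeasurableSet.univ T.measurable.aemeasurable]
  simp

lemma my_bind_ac {μ π : Measure X} (h : μ ≪ π) (T : Kernel X X) :
    μ.bind (fun x => T x) ≪ π.bind (fun x => T x) := by
  refine Measure.AbsolutelyContinuous.mk (fun s hs h0 => ?_)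
  rw [Measure.bind_apply hs T.measurable.aemeasurable] at h0 ⊢
  have h1 : ∀ᵐ x ∂π, T x s = 0 := (lintegral_eq_zero_iff (T.measurable_coe hs)).mp h0
  rw [lintegral_eq_zero_iff (T.measurable_coe hs)]
  exact h.ae_le h1

/-- x * max (-(log x)) 0 ≤ exp (-1) for x ≥ 0 -/
lemma my_negpart_bound {t : ℝ} (ht : 0 ≤ t) : t * max (-(Real.log t)) 0 ≤ Real.exp (-1) := by
  rcases eq_or_lt_of_le ht with h0 | h0
  · simp [← h0]; positivity
  rcases le_or_gt 1 t with h1 | h1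
  · have : Real.log t ≥ 0 := Real.log_nonneg h1
    rw [max_eq_right (by linarith)]
    simp [Real.exp_pos _ |>.le]
  · have hl : Real.log t < 0 := Real.log_neg h0 h1
    rw [max_eq_left (by linarith)]
    have key : -(Real.log t) ≤ 1 / (t * Real.exp 1) := by
      have h2 : Real.log (1 / (t * Real.exp 1)) ≤ 1 / (t * Real.exp 1) - 1 :=
        Real.log_le_sub_one_of_pos (by positivity)
      rw [Real.log_div one_ne_zero (by positivity), Real.log_one, Real.log_mul (ne_of_gt h0)
        (Real.exp_pos 1).ne', Real.log_exp] at h2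
      linarith
    calc t * (-(Real.log t)) ≤ t * (1 / (t * Real.exp 1)) := by
          exact mul_le_mul_of_nonneg_left key ht
      _ = 1 / Real.exp 1 := by field_simp
      _ = Real.exp (-1) := by rw [Real.exp_neg]; ring

end Aux


lemma my_gibbs {X : Type*} [MeasurableSpace X] (μ π : Measure X)
    [IsProbabilityMeasure μ] [IsProbabilityMeasure π]
    (hac : μ ≪ π) (hint : Integrable (llr μ π) μ) {ψ : X → ℝ} (hψ : Measurable ψ)
    {C : ℝ} (hb : ∀ x, |ψ x| ≤ C) :
    ∫ x, ψ x ∂μ ≤ ∫ x, llr μ π x ∂μ + Real.log (∫ x, Real.exp (ψ x) ∂π) := by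
  have hψbd : ∀ x, ψ x ≤ C := fun x => (abs_le.mp (hb x)).2
  have hψbd' : ∀ x, -C ≤ ψ x := fun x => (abs_le.mp (hb x)).1
  have hψintμ : Integrable ψ μ := by
    refine (integrable_const C).mono' hψ.aestronglyMeasurable ?_
    filter_upwards with x using by simpa [Real.norm_eq_abs] using hb x
  have hexpint : Integrable (fun x => Real.exp (ψ x)) π := by
    refine (integrable_const (Real.exp C)).mono' (hψ.exp).aestronglyMeasurable ?_
    filter_upwards with x
    rw [Real.norm_eq_abs, abs_of_nonneg (Real.exp_pos _).le]
    exact Real.exp_le_exp.mpr (hψbd x)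
  set Z : ℝ := ∫ x, Real.exp (ψ x) ∂π with hZdef
  have hZpos : 0 < Z := by
    have h1 : (Real.exp (-C)) = ∫ _x, Real.exp (-C) ∂π := by simp
    rw [hZdef]
    calc (0:ℝ) < Real.exp (-C) := Real.exp_pos _
      _ = ∫ _x, Real.exp (-C) ∂π := h1
      _ ≤ ∫ x, Real.exp (ψ x) ∂π := by
          refine integral_mono (integrable_const _) hexpint fun x => ?_
          exact Real.exp_le_exp.mpr (hψbd' x)
  set g : X → ℝ := fun x => Real.exp (ψ x - Real.log Z) with hgdef
  have hgme : Measurable g := (hψ.sub measurable_const).exp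
  have hgpos : ∀ x, 0 < g x := fun x => Real.exp_pos _
  have hgint : Integrable g π := by
    simp only [hgdef, Real.exp_sub]
    exact hexpint.div_const _
  have hgone : ∫ x, g x ∂π = 1 := by
    simp only [hgdef, Real.exp_sub]
    rw [integral_div, Real.exp_log hZpos, div_self hZpos.ne']
  set f : X → ℝ := fun x => (μ.rnDeriv π x).toReal with hfdef
  have hfme : Measurable f := (Measure.measurable_rnDeriv μ π).ennreal_toReal
  set h : X → ℝ := fun x => g x / f x with hhdef
  have hhme : Measurable h := hgme.div hfme
  have hhnn : ∀ x, 0 ≤ h x := fun x => div_nonneg (hgpos x).le (ENNReal.toReal_nonneg)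
  -- a.e. positivity / finiteness of density
  have hpos : ∀ᵐ x ∂μ, 0 < μ.rnDeriv π x := Measure.rnDeriv_pos hac
  have hlt : ∀ᵐ x ∂μ, μ.rnDeriv π x < ∞ := hac.ae_le (Measure.rnDeriv_lt_top μ π)
  -- key lintegral bound
  have hlin : ∫⁻ x, ENNReal.ofReal (h x) ∂μ ≤ 1 := by
    rw [← lintegral_rnDeriv_mul hac (hhme.ennreal_ofReal).aemeasurable]
    have hpt : ∀ᵐ x ∂π, μ.rnDeriv π x * ENNReal.ofReal (h x) ≤ ENNReal.ofReal (g x) := by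
      filter_upwards [Measure.rnDeriv_lt_top μ π] with x hx
      rcases eq_or_ne (μ.rnDeriv π x) 0 with h0 | h0
      · simp [h0]
      · have hfx : 0 < f x := ENNReal.toReal_pos h0 hx.ne
        rw [← ENNReal.ofReal_toReal hx.ne, ← ENNReal.ofReal_mul ENNReal.toReal_nonneg]
        apply ENNReal.ofReal_le_ofReal
        rw [hhdef]
        field_simp
        exact le_of_eq (mul_comm _ _)
    calc ∫⁻ x, μ.rnDeriv π x * ENNReal.ofReal (h x) ∂π
        ≤ ∫⁻ x, ENNReal.ofReal (g x) ∂π := lintegral_mono_ae hpt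
      _ = ENNReal.ofReal (∫ x, g x ∂π) :=
          (ofReal_integral_eq_lintegral_ofReal hgint
            (Filter.Eventually.of_forall fun x => (hgpos x).le)).symm
      _ = 1 := by rw [hgone]; simp
  have hhint : Integrable h μ := by
    refine ⟨hhme.aestronglyMeasurable, ?_⟩
    rw [hasFiniteIntegral_iff_norm]
    have : ∀ x, ENNReal.ofReal ‖h x‖ = ENNReal.ofReal (h x) := fun x => by
      rw [Real.norm_eq_abs, abs_of_nonneg (hhnn x)]
    simp_rw [this]
    exact lt_of_le_of_lt hlin one_lt_top
  have hhle : ∫ x, h x ∂μ ≤ 1 := by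
    rw [integral_eq_lintegral_of_nonneg_ae (Filter.Eventually.of_forall hhnn)
      hhme.aestronglyMeasurable]
    calc (∫⁻ x, ENNReal.ofReal (h x) ∂μ).toReal ≤ (1:ℝ≥0∞).toReal :=
        ENNReal.toReal_mono one_ne_top hlin
      _ = 1 := by simp
  -- pointwise inequality
  have hptμ : ∀ᵐ x ∂μ, ψ x - Real.log Z - llr μ π x ≤ h x - 1 := by
    filter_upwards [hpos, hlt] with x hx0 hx1
    have hfx : 0 < f x := ENNReal.toReal_pos hx0.ne' hx1.ne
    have hhx : 0 < h x := div_pos (hgpos x) hfx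
    have : Real.log (h x) ≤ h x - 1 := Real.log_le_sub_one_of_pos hhx
    rw [hhdef] at this ⊢
    rw [Real.log_div (hgpos x).ne' hfx.ne'] at this
    have hlg : Real.log (g x) = ψ x - Real.log Z := by rw [hgdef]; exact Real.log_exp _
    rw [hlg] at this
    simpa [llr, hfdef] using this
  have hlhs_int : Integrable (fun x => ψ x - Real.log Z - llr μ π x) μ :=
    (hψintμ.sub (integrable_const _)).sub hint
  have hineq : ∫ x, (ψ x - Real.log Z - llr μ π x) ∂μ ≤ ∫ x, (h x - 1) ∂μ :=
    integral_mono_ae hlhs_int (hhint.sub (integrable_const 1)) hptμ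
  have i1 : Integrable (fun x => ψ x - Real.log Z) μ := hψintμ.sub (integrable_const _)
  have i2 : Integrable (fun x => h x - 1) μ := hhint.sub (integrable_const 1)
  rw [integral_sub i1 hint, integral_sub hψintμ (integrable_const _),
    integral_sub hhint (integrable_const 1)] at hineq
  simp only [integral_const, measure_univ, probReal_univ, ENNReal.toReal_one, smul_eq_mul, one_mul] at hineq
  linarith




lemma my_jensen (ρ : Measure X) [IsProbabilityMeasure ρ]
    {ψ : X → ℝ} (hψ : Measurable ψ) {C : ℝ} (hb : ∀ x, |ψ x| ≤ C) :
    ∫ x, ψ x ∂ρ ≤ Real.log (∫ x, Real.exp (ψ x) ∂ρ) := by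
  have h0 : llr ρ ρ =ᵐ[ρ] fun _ => (0:ℝ) := by
    filter_upwards [Measure.rnDeriv_self ρ] with x hx
    simp [llr, hx]
  have hint : Integrable (llr ρ ρ) ρ := (integrable_const (0:ℝ)).congr h0.symm
  have := my_gibbs ρ ρ Measure.AbsolutelyContinuous.rfl hint hψ hb
  rwa [integral_congr_ae h0, integral_zero, zero_add] at this

lemma my_meas_kint (T : Kernel X X) [IsSFiniteKernel T] {φ : X → ℝ} (hφ : Measurable φ) :
    Measurable (fun x => ∫ y, φ y ∂(T x)) :=
  (MeasureTheory.StronglyMeasurable.integral_kernel_prod_right (κ := T)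
    (f := fun _ y => φ y) ((hφ.comp measurable_snd).stronglyMeasurable)).measurable

lemma my_int_of_bdd (ρ : Measure X) [IsProbabilityMeasure ρ] {φ : X → ℝ}
    (hφ : Measurable φ) {C : ℝ} (hb : ∀ x, |φ x| ≤ C) : Integrable φ ρ := by
  refine (integrable_const C).mono' hφ.aestronglyMeasurable ?_
  filter_upwards with x using by simpa [Real.norm_eq_abs] using hb x

lemma my_integral_bind (μ : Measure X) [IsProbabilityMeasure μ] (T : Kernel X X)
    [IsMarkovKernel T] {φ : X → ℝ} (hφ : Measurable φ) {C : ℝ} (hb : ∀ x, |φ x| ≤ C) :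
    ∫ y, φ y ∂(μ.bind (fun x => T x)) = ∫ x, ∫ y, φ y ∂(T x) ∂μ := by
  have hX : Nonempty X := by
    by_contra hX
    rw [not_nonempty_iff] at hX
    have h1 : μ Set.univ = 1 := measure_univ
    simp [Set.univ_eq_empty_iff.mpr hX] at h1
  have hC : 0 ≤ C := le_trans (abs_nonneg _) (hb hX.some)
  haveI hνP : IsProbabilityMeasure (μ.bind (fun x => T x)) := by
    constructor
    rw [Measure.bind_apply MeasurableSet.univ T.measurable.aemeasurable]
    simp
  set u : X → ℝ := fun y => φ y + C with hudef
  have hume : Measurable u := hφ.add measurable_const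
  have hunn : ∀ y, 0 ≤ u y := fun y => by
    have := (abs_le.mp (hb y)).1; simp only [hudef]; linarith
  have hubd : ∀ y, u y ≤ 2 * C := fun y => by
    have := (abs_le.mp (hb y)).2; simp only [hudef]; linarith
  have huint : ∀ (ρ : Measure X), IsProbabilityMeasure ρ → Integrable u ρ := by
    intro ρ hρ
    refine my_int_of_bdd ρ hume (C := 2 * C) fun x => ?_
    rw [abs_of_nonneg (hunn x)]; exact hubd x
  -- inner equality
  have hinner : ∀ x, ∫⁻ y, ENNReal.ofReal (u y) ∂(T x) = ENNReal.ofReal (∫ y, u y ∂(T x)) :=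
    fun x => (ofReal_integral_eq_lintegral_ofReal (huint _ inferInstance)
      (Filter.Eventually.of_forall hunn)).symm
  have hFme : Measurable (fun x => ∫ y, u y ∂(T x)) := my_meas_kint T hume
  have hFnn : ∀ x, 0 ≤ ∫ y, u y ∂(T x) := fun x =>
    integral_nonneg hunn
  have hFbd : ∀ x, |∫ y, u y ∂(T x)| ≤ 2 * C := fun x => by
    rw [abs_of_nonneg (hFnn x)]
    calc ∫ y, u y ∂(T x) ≤ ∫ _y, 2 * C ∂(T x) :=
          integral_mono (huint _ inferInstance) (integrable_const _) hubd
      _ = 2 * C := by simp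
  have hFint : Integrable (fun x => ∫ y, u y ∂(T x)) μ := my_int_of_bdd μ hFme hFbd
  -- main chain for u
  have hu : ∫ y, u y ∂(μ.bind (fun x => T x)) = ∫ x, ∫ y, u y ∂(T x) ∂μ := by
    rw [integral_eq_lintegral_of_nonneg_ae (Filter.Eventually.of_forall hunn)
      hume.aestronglyMeasurable,
      Measure.lintegral_bind T.measurable.aemeasurable hume.ennreal_ofReal.aemeasurable]
    simp_rw [hinner]
    rw [← ofReal_integral_eq_lintegral_ofReal hFint (Filter.Eventually.of_forall hFnn),
      ENNReal.toReal_ofReal (integral_nonneg hFnn)]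
  -- remove the constant
  have hφν : Integrable φ (μ.bind (fun x => T x)) := my_int_of_bdd _ hφ hb
  have hφT : ∀ x, Integrable φ (T x) := fun x => my_int_of_bdd _ hφ hb
  have hGint : Integrable (fun x => ∫ y, φ y ∂(T x)) μ := by
    refine my_int_of_bdd μ (my_meas_kint T hφ) (C := C) fun x => ?_
    calc |∫ y, φ y ∂(T x)| ≤ ∫ y, |φ y| ∂(T x) := by simpa [Real.norm_eq_abs] using norm_integral_le_integral_norm (μ := T x) φ
      _ ≤ ∫ _y, C ∂(T x) := integral_mono (hφT x).abs (integrable_const _) hb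
      _ = C := by simp
  simp only [hudef] at hu
  rw [integral_add hφν (integrable_const C)] at hu
  have : ∀ x, ∫ y, (φ y + C) ∂(T x) = ∫ y, φ y ∂(T x) + C := fun x => by
    rw [integral_add (hφT x) (integrable_const C)]; simp
  simp_rw [this] at hu
  rw [integral_add hGint (integrable_const C)] at hu
  simp only [integral_const, measure_univ, probReal_univ, ENNReal.toReal_one, smul_eq_mul, one_mul] at hu
  linarith
lemma my_hc_exp (π : Measure X) [IsProbabilityMeasure π]
    (T : Kernel X X) [IsMarkovKernel T]
    (p q : ℝ) (hp : 1 ≤ p) (hpq : p ≤ q)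
    (hHC : ∀ g : X → ℝ, Measurable g → (∀ x, 0 ≤ g x) → MemLp g (ENNReal.ofReal p) π →
      eLpNorm (fun x => ∫ y, g y ∂(T x)) (ENNReal.ofReal q) π ≤ eLpNorm g (ENNReal.ofReal p) π)
    {φ : X → ℝ} (hφ : Measurable φ) {C : ℝ} (hb : ∀ x, |φ x| ≤ C) :
    ∫ x, Real.exp ((q/p) * ∫ y, φ y ∂(T x)) ∂π
      ≤ (∫ y, Real.exp (φ y) ∂π) ^ (q/p) := by
  have hp0 : 0 < p := lt_of_lt_of_le zero_lt_one hp
  have hq0 : 0 < q := lt_of_lt_of_le hp0 hpq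
  have hjensen : ∀ (ρ : Measure X), IsProbabilityMeasure ρ →
      ∫ x, φ x / p ∂ρ ≤ Real.log (∫ x, Real.exp (φ x / p) ∂ρ) := by
    intro ρ hρ
    refine my_jensen ρ (hφ.div_const p) (C := C / p) fun x => ?_
    rw [abs_div, abs_of_pos hp0]
    gcongr
    exact hb x
  set g : X → ℝ := fun y => Real.exp (φ y / p) with hgdef
  have hgme : Measurable g := (hφ.div_const p).exp
  have hgpos : ∀ y, 0 < g y := fun y => Real.exp_pos _
  have hgbd : ∀ y, |g y| ≤ Real.exp (C / p) := fun y => by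
    rw [abs_of_nonneg (hgpos y).le]
    exact Real.exp_le_exp.mpr (by gcongr; exact (abs_le.mp (hb y)).2)
  have hgmem : MemLp g (ENNReal.ofReal p) π := by
    refine MemLp.of_bound hgme.aestronglyMeasurable (Real.exp (C / p)) ?_
    filter_upwards with x using by simpa [Real.norm_eq_abs] using hgbd x
  have hkey := hHC g hgme (fun x => (hgpos x).le) hgmem
  set Tg : X → ℝ := fun x => ∫ y, g y ∂(T x) with hTgdef
  have hgInt : ∀ x, Integrable g (T x) := fun x => my_int_of_bdd _ hgme hgbd
  have hTgpos : ∀ x, 0 < Tg x := fun x => by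
    have h1 : Real.exp (-(C/p)) = ∫ _y, Real.exp (-(C/p)) ∂(T x) := by simp
    calc (0:ℝ) < Real.exp (-(C/p)) := Real.exp_pos _
      _ = ∫ _y, Real.exp (-(C/p)) ∂(T x) := h1
      _ ≤ Tg x := by
        refine integral_mono (integrable_const _) (hgInt x) fun y => ?_
        exact Real.exp_le_exp.mpr (by rw [← neg_div]; gcongr; exact (abs_le.mp (hb y)).1)
  -- rewrite eLpNorms as lintegrals
  have hqne : ENNReal.ofReal q ≠ 0 := by simp [ENNReal.ofReal_eq_zero, not_le, hq0]
  have hpne : ENNReal.ofReal p ≠ 0 := by simp [ENNReal.ofReal_eq_zero, not_le, hp0]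
  have hqtop : ENNReal.ofReal q ≠ ∞ := ofReal_ne_top
  have hptop : ENNReal.ofReal p ≠ ∞ := ofReal_ne_top
  rw [eLpNorm_eq_lintegral_rpow_enorm_toReal hqne hqtop, eLpNorm_eq_lintegral_rpow_enorm_toReal hpne hptop,
    ENNReal.toReal_ofReal hq0.le, ENNReal.toReal_ofReal hp0.le] at hkey
  set A : ℝ≥0∞ := ∫⁻ x, ‖Tg x‖ₑ ^ q ∂π with hAdef
  set B : ℝ≥0∞ := ∫⁻ x, ‖g x‖ₑ ^ p ∂π with hBdef
  have hAB : A ≤ B ^ (q / p) := by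
    have h1 : (A ^ (1/q)) ^ q ≤ (B ^ (1/p)) ^ q := ENNReal.rpow_le_rpow hkey hq0.le
    rw [← ENNReal.rpow_mul, ← ENNReal.rpow_mul, one_div_mul_cancel hq0.ne',
      ENNReal.rpow_one] at h1
    have he : (1/p) * q = q / p := by field_simp
    rwa [he] at h1
  -- identify B
  have hexpint : Integrable (fun y => Real.exp (φ y)) π := by
    refine my_int_of_bdd _ hφ.exp (C := Real.exp C) fun y => ?_
    rw [abs_of_nonneg (Real.exp_pos _).le]
    exact Real.exp_le_exp.mpr (abs_le.mp (hb y)).2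
  have hBeq : B = ENNReal.ofReal (∫ y, Real.exp (φ y) ∂π) := by
    rw [hBdef]
    have : ∀ y, ‖g y‖ₑ ^ p = ENNReal.ofReal (Real.exp (φ y)) := fun y => by
      rw [Real.enorm_eq_ofReal (hgpos y).le, ENNReal.ofReal_rpow_of_pos (hgpos y)]
      congr 1
      rw [← Real.exp_mul, div_mul_cancel₀ _ hp0.ne']
    simp_rw [this]
    rw [← ofReal_integral_eq_lintegral_ofReal hexpint
      (Filter.Eventually.of_forall fun y => (Real.exp_pos _).le)]
  -- pointwise Jensen bound
  have hptw : ∀ x, Real.exp ((q/p) * ∫ y, φ y ∂(T x)) ≤ (Tg x) ^ q := by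
    intro x
    have hj := hjensen (T x) inferInstance
    have h2 : ∫ y, φ y / p ∂(T x) = (∫ y, φ y ∂(T x)) / p := integral_div p φ
    rw [h2] at hj
    have h3 : Real.exp ((∫ y, φ y ∂(T x)) / p) ≤ Tg x := by
      calc Real.exp ((∫ y, φ y ∂(T x)) / p) ≤ Real.exp (Real.log (Tg x)) :=
            Real.exp_le_exp.mpr hj
        _ = Tg x := Real.exp_log (hTgpos x)
    calc Real.exp ((q/p) * ∫ y, φ y ∂(T x))
        = (Real.exp ((∫ y, φ y ∂(T x)) / p)) ^ q := by
          rw [← Real.exp_mul]; congr 1; field_simp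
      _ ≤ (Tg x) ^ q := Real.rpow_le_rpow (Real.exp_pos _).le h3 hq0.le
  -- assemble
  have hΦbd : ∀ x, |∫ y, φ y ∂(T x)| ≤ C := fun x => by
    calc |∫ y, φ y ∂(T x)| ≤ ∫ y, |φ y| ∂(T x) := by
          simpa [Real.norm_eq_abs] using norm_integral_le_integral_norm (μ := T x) φ
      _ ≤ ∫ _y, C ∂(T x) := integral_mono (my_int_of_bdd _ hφ hb).abs (integrable_const _) hb
      _ = C := by simp
  have hLme : Measurable (fun x => Real.exp ((q/p) * ∫ y, φ y ∂(T x))) :=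
    ((my_meas_kint T hφ).const_mul (q/p)).exp
  have hLint : Integrable (fun x => Real.exp ((q/p) * ∫ y, φ y ∂(T x))) π := by
    refine my_int_of_bdd _ hLme (C := Real.exp ((q/p) * C)) fun x => ?_
    rw [abs_of_nonneg (Real.exp_pos _).le]
    refine Real.exp_le_exp.mpr ?_
    have := (abs_le.mp (hΦbd x)).2
    have hqp : 0 ≤ q / p := div_nonneg hq0.le hp0.le
    nlinarith
  have hLlin : ENNReal.ofReal (∫ x, Real.exp ((q/p) * ∫ y, φ y ∂(T x)) ∂π) ≤ B ^ (q/p) := by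
    rw [ofReal_integral_eq_lintegral_ofReal hLint
      (Filter.Eventually.of_forall fun x => (Real.exp_pos _).le)]
    refine le_trans (le_trans ?_ (le_of_eq rfl)) hAB
    rw [hAdef]
    refine lintegral_mono fun x => ?_
    rw [Real.enorm_eq_ofReal (integral_nonneg fun y => (hgpos y).le),
      ENNReal.ofReal_rpow_of_pos (hTgpos x)]
    exact ENNReal.ofReal_le_ofReal (hptw x)
  have hRpos : 0 < ∫ y, Real.exp (φ y) ∂π := by
    have h1 : Real.exp (-C) = ∫ _y, Real.exp (-C) ∂π := by simp
    calc (0:ℝ) < Real.exp (-C) := Real.exp_pos _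
      _ = ∫ _y, Real.exp (-C) ∂π := h1
      _ ≤ ∫ y, Real.exp (φ y) ∂π := by
        refine integral_mono (integrable_const _) hexpint fun y => ?_
        exact Real.exp_le_exp.mpr (abs_le.mp (hb y)).1
  rw [hBeq, ENNReal.ofReal_rpow_of_pos hRpos] at hLlin
  exact (ENNReal.ofReal_le_ofReal_iff (Real.rpow_nonneg hRpos.le _)).mp hLlin

lemma my_nonempty (μ : Measure X) [IsProbabilityMeasure μ] : Nonempty X := by
  by_contra hX
  rw [not_nonempty_iff] at hX
  have h1 : μ Set.univ = 1 := measure_univ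
  simp [Set.univ_eq_empty_iff.mpr hX] at h1

lemma my_master (π : Measure X) [IsProbabilityMeasure π]
    (T : Kernel X X) [IsMarkovKernel T]
    (p q : ℝ) (hp : 1 ≤ p) (hpq : p ≤ q)
    (hHC : ∀ g : X → ℝ, Measurable g → (∀ x, 0 ≤ g x) → MemLp g (ENNReal.ofReal p) π →
      eLpNorm (fun x => ∫ y, g y ∂(T x)) (ENNReal.ofReal q) π ≤ eLpNorm g (ENNReal.ofReal p) π)
    (μ : Measure X) [IsProbabilityMeasure μ] (hac : μ ≪ π) (hint : Integrable (llr μ π) μ)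
    {φ : X → ℝ} (hφ : Measurable φ) {C : ℝ} (hb : ∀ x, |φ x| ≤ C) :
    ∫ y, φ y ∂(μ.bind (fun x => T x))
      ≤ (p/q) * (∫ x, llr μ π x ∂μ) + Real.log (∫ x, Real.exp (φ x) ∂π) := by
  have hp0 : 0 < p := lt_of_lt_of_le zero_lt_one hp
  have hq0 : 0 < q := lt_of_lt_of_le hp0 hpq
  have hX : Nonempty X := my_nonempty μ
  have hC : 0 ≤ C := le_trans (abs_nonneg _) (hb hX.some)
  set Φ : X → ℝ := fun x => ∫ y, φ y ∂(T x) with hΦdef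
  have hΦme : Measurable Φ := my_meas_kint T hφ
  have hΦbd : ∀ x, |Φ x| ≤ C := fun x => by
    calc |Φ x| ≤ ∫ y, |φ y| ∂(T x) := by
          simpa [Real.norm_eq_abs] using norm_integral_le_integral_norm (μ := T x) φ
      _ ≤ ∫ _y, C ∂(T x) :=
          integral_mono (my_int_of_bdd _ hφ hb).abs (integrable_const _) hb
      _ = C := by simp
  have step1 : ∫ y, φ y ∂(μ.bind fun x => T x) = ∫ x, Φ x ∂μ := my_integral_bind μ T hφ hb
  have hqp : 0 < q / p := div_pos hq0 hp0
  have hψme : Measurable (fun x => (q/p) * Φ x) := hΦme.const_mul _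
  have hψbd : ∀ x, |(q/p) * Φ x| ≤ (q/p) * C := fun x => by
    rw [abs_mul, abs_of_pos hqp]
    gcongr
    exact hΦbd x
  have hgibbs := my_gibbs μ π hac hint hψme hψbd
  have hhc := my_hc_exp π T p q hp hpq hHC hφ hb
  have hexpint : Integrable (fun y => Real.exp (φ y)) π := by
    refine my_int_of_bdd _ hφ.exp (C := Real.exp C) fun y => ?_
    rw [abs_of_nonneg (Real.exp_pos _).le]
    exact Real.exp_le_exp.mpr (abs_le.mp (hb y)).2
  have hRpos : 0 < ∫ y, Real.exp (φ y) ∂π := by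
    have h1 : Real.exp (-C) = ∫ _y, Real.exp (-C) ∂π := by simp
    calc (0:ℝ) < Real.exp (-C) := Real.exp_pos _
      _ = ∫ _y, Real.exp (-C) ∂π := h1
      _ ≤ ∫ y, Real.exp (φ y) ∂π := by
        refine integral_mono (integrable_const _) hexpint fun y => ?_
        exact Real.exp_le_exp.mpr (abs_le.mp (hb y)).1
  have hEme : Measurable (fun x => Real.exp ((q/p) * Φ x)) := hψme.exp
  have hEint : Integrable (fun x => Real.exp ((q/p) * Φ x)) π := by
    refine my_int_of_bdd _ hEme (C := Real.exp ((q/p) * C)) fun x => ?_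
    rw [abs_of_nonneg (Real.exp_pos _).le]
    exact Real.exp_le_exp.mpr (abs_le.mp (hψbd x)).2
  have hEpos : 0 < ∫ x, Real.exp ((q/p) * Φ x) ∂π := by
    have h1 : Real.exp (-((q/p) * C)) = ∫ _y, Real.exp (-((q/p) * C)) ∂π := by simp
    calc (0:ℝ) < Real.exp (-((q/p) * C)) := Real.exp_pos _
      _ = ∫ _y, Real.exp (-((q/p) * C)) ∂π := h1
      _ ≤ ∫ x, Real.exp ((q/p) * Φ x) ∂π := by
        refine integral_mono (integrable_const _) hEint fun x => ?_
        exact Real.exp_le_exp.mpr (abs_le.mp (hψbd x)).1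
  have hlog : Real.log (∫ x, Real.exp ((q/p) * Φ x) ∂π)
      ≤ (q/p) * Real.log (∫ y, Real.exp (φ y) ∂π) := by
    calc Real.log (∫ x, Real.exp ((q/p) * Φ x) ∂π)
        ≤ Real.log ((∫ y, Real.exp (φ y) ∂π) ^ (q/p)) := Real.log_le_log hEpos hhc
      _ = (q/p) * Real.log (∫ y, Real.exp (φ y) ∂π) := Real.log_rpow hRpos _
  have hsm : ∫ x, (q/p) * Φ x ∂μ = (q/p) * ∫ x, Φ x ∂μ := integral_const_mul _ _
  rw [hsm] at hgibbs
  set S := ∫ x, Φ x ∂μ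
  set H := ∫ x, llr μ π x ∂μ
  set L := Real.log (∫ y, Real.exp (φ y) ∂π)
  have key : (q/p) * S ≤ H + (q/p) * L := by
    calc (q/p) * S ≤ H + Real.log (∫ x, Real.exp ((q/p) * Φ x) ∂π) := hgibbs
      _ ≤ H + (q/p) * L := by linarith
  have hpq0 : 0 < p / q := div_pos hp0 hq0
  have h2 := mul_le_mul_of_nonneg_left key hpq0.le
  have hpq1 : (p/q) * (q/p) = 1 := by field_simp
  have h3 : (p/q) * ((q/p) * S) = S := by rw [← mul_assoc, hpq1, one_mul]
  have h4 : (p/q) * ((q/p) * L) = L := by rw [← mul_assoc, hpq1, one_mul]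
  rw [mul_add] at h2
  rw [step1]
  linarith

lemma my_clamp_abs {s c : ℝ} (hc : 0 ≤ c) : |max (min s c) (-c)| ≤ |s| := by
  rcases le_total s (-c) with h1 | h1
  · have : min s c = s := min_eq_left (by linarith)
    rw [this, max_eq_right h1, abs_neg, abs_of_nonneg hc, abs_of_nonpos (by linarith)]
    linarith
  rcases le_total c s with h2 | h2
  · rw [min_eq_right h2, max_eq_left (by linarith), abs_of_nonneg hc, abs_of_nonneg (by linarith)]
    linarith
  · rw [min_eq_left h2, max_eq_left h1]

lemma my_clamp_neg {s c : ℝ} (hc : 0 ≤ c) : -(max (min s c) (-c)) ≤ max (-s) 0 := by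
  have h1 : min s 0 ≤ max (min s c) (-c) :=
    le_trans (min_le_min le_rfl hc) (le_max_left _ _)
  refine (neg_le_neg h1).trans ?_
  rcases le_total s 0 with h | h
  · rw [min_eq_left h]; exact le_max_left _ _
  · rw [min_eq_right h]; simp

lemma my_clamp_ofReal {s c : ℝ} (hc : 0 ≤ c) :
    ENNReal.ofReal (max (min s c) (-c)) = ENNReal.ofReal (min s c) := by
  rcases le_total (-c) (min s c) with h | h
  · rw [max_eq_left h]
  · rw [max_eq_right h, ENNReal.ofReal_eq_zero.mpr (by linarith),
      ENNReal.ofReal_eq_zero.mpr (by linarith)]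

lemma my_log_clamp {s ε M : ℝ} (hs : 0 < s) (hε : 0 < ε) (hεM : ε ≤ M) :
    Real.log (min (max s ε) M) = max (min (Real.log s) (Real.log M)) (Real.log ε) := by
  rcases le_total s ε with h1 | h1
  · rw [max_eq_right h1, min_eq_left hεM, min_eq_left (Real.log_le_log hs (h1.trans hεM)),
      max_eq_right (Real.log_le_log hs h1)]
  rcases le_total s M with h2 | h2
  · rw [max_eq_left h1, min_eq_left h2, min_eq_left (Real.log_le_log hs h2),
      max_eq_left (Real.log_le_log hε h1)]
  · rw [max_eq_left h1, min_eq_right h2, min_eq_right (Real.log_le_log (hε.trans_le hεM) h2),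
      max_eq_left (Real.log_le_log hε hεM)]

lemma my_llr_negpart (ν π : Measure X) [IsProbabilityMeasure ν] [IsProbabilityMeasure π]
    (hac : ν ≪ π) :
    ∫⁻ x, ENNReal.ofReal (max (-(llr ν π x)) 0) ∂ν ≤ ENNReal.ofReal (Real.exp (-1)) := by
  have hme : Measurable fun x => ENNReal.ofReal (max (-(llr ν π x)) 0) :=
    (((measurable_llr _ _).neg.max measurable_const)).ennreal_ofReal
  rw [← lintegral_rnDeriv_mul hac hme.aemeasurable]
  calc ∫⁻ x, ν.rnDeriv π x * ENNReal.ofReal (max (-(llr ν π x)) 0) ∂π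
      ≤ ∫⁻ _x, ENNReal.ofReal (Real.exp (-1)) ∂π := by
        refine lintegral_mono_ae ?_
        filter_upwards [Measure.rnDeriv_lt_top ν π] with x hx
        rw [← ENNReal.ofReal_toReal hx.ne, ← ENNReal.ofReal_mul ENNReal.toReal_nonneg]
        exact ENNReal.ofReal_le_ofReal (my_negpart_bound ENNReal.toReal_nonneg)
    _ = ENNReal.ofReal (Real.exp (-1)) := by simp

noncomputable def myPhi (f : X → ℝ) (n : ℕ) (x : X) : ℝ :=
  Real.log (min (max (f x) (Real.exp (-((n:ℝ)+1)))) (Real.exp ((n:ℝ)+1)))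

lemma myPhi_me {f : X → ℝ} (hf : Measurable f) (n : ℕ) : Measurable (myPhi f n) :=
  ((hf.max measurable_const).min measurable_const).log

lemma myPhi_arg_pos (f : X → ℝ) (n : ℕ) (x : X) :
    0 < min (max (f x) (Real.exp (-((n:ℝ)+1)))) (Real.exp ((n:ℝ)+1)) :=
  lt_min (lt_of_lt_of_le (Real.exp_pos _) (le_max_right _ _)) (Real.exp_pos _)

lemma myPhi_eM (n : ℕ) : Real.exp (-((n:ℝ)+1)) ≤ Real.exp ((n:ℝ)+1) :=
  Real.exp_le_exp.mpr (by nlinarith [Nat.cast_nonneg (α := ℝ) n])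

lemma myPhi_abs_le (f : X → ℝ) (n : ℕ) (x : X) : |myPhi f n x| ≤ (n:ℝ)+1 := by
  rw [abs_le]
  constructor
  · have h1 : Real.exp (-((n:ℝ)+1))
        ≤ min (max (f x) (Real.exp (-((n:ℝ)+1)))) (Real.exp ((n:ℝ)+1)) :=
      le_min (le_max_right _ _) (myPhi_eM n)
    calc -((n:ℝ)+1) = Real.log (Real.exp (-((n:ℝ)+1))) := (Real.log_exp _).symm
      _ ≤ myPhi f n x := Real.log_le_log (Real.exp_pos _) h1
  · calc myPhi f n x ≤ Real.log (Real.exp ((n:ℝ)+1)) :=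
        Real.log_le_log (myPhi_arg_pos f n x) (min_le_right _ _)
      _ = (n:ℝ)+1 := Real.log_exp _

lemma myPhi_exp (f : X → ℝ) (n : ℕ) (x : X) :
    Real.exp (myPhi f n x) = min (max (f x) (Real.exp (-((n:ℝ)+1)))) (Real.exp ((n:ℝ)+1)) :=
  Real.exp_log (myPhi_arg_pos f n x)

lemma myPhi_clamp {f : X → ℝ} {x : X} (hx : 0 < f x) (n : ℕ) :
    myPhi f n x = max (min (Real.log (f x)) ((n:ℝ)+1)) (-((n:ℝ)+1)) := by
  rw [myPhi, my_log_clamp hx (Real.exp_pos _) (myPhi_eM n), Real.log_exp, Real.log_exp]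

end All

/-- Kullback-Leibler divergence `H(μ | π)`, valued in `[0, ∞]`: equal to
`∫ log (dμ/dπ) dμ` when `μ ≪ π` and this integral makes sense, and `+∞` otherwise. -/
noncomputable def klDiv {X : Type*} [MeasurableSpace X] (μ π : Measure X) : ℝ≥0∞ :=
  if μ ≪ π ∧ Integrable (llr μ π) μ then ENNReal.ofReal (∫ x, llr μ π x ∂μ) else ∞

/-- **Main theorem**: one-step hyper-contractivity `‖Tg‖_q ≤ ‖g‖_p` for a measure-preserving
Markov kernel implies the one-step entropy contraction `H(μT | π) ≤ (p/q) H(μ | π)`. -/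
theorem hypercontractivity_implies_entropy_contraction
    {X : Type*} [MeasurableSpace X] (π : Measure X) [IsProbabilityMeasure π]
    (T : Kernel X X) [IsMarkovKernel T]
    (hstat : π.bind (fun x => T x) = π)
    (p q : ℝ) (hp : 1 ≤ p) (hpq : p ≤ q)
    (hHC : ∀ g : X → ℝ, Measurable g → (∀ x, 0 ≤ g x) → MemLp g (ENNReal.ofReal p) π →
      eLpNorm (fun x => ∫ y, g y ∂(T x)) (ENNReal.ofReal q) π ≤ eLpNorm g (ENNReal.ofReal p) π)
    (μ : Measure X) [IsProbabilityMeasure μ] :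
    klDiv (μ.bind (fun x => T x)) π ≤ ENNReal.ofReal (p / q) * klDiv μ π := by
  have hp0 : 0 < p := lt_of_lt_of_le zero_lt_one hp
  have hq0 : 0 < q := lt_of_lt_of_le hp0 hpq
  have hpq0 : 0 < p / q := div_pos hp0 hq0
  by_cases hcase : μ ≪ π ∧ Integrable (llr μ π) μ
  swap
  · have h1 : klDiv μ π = ∞ := by rw [klDiv, if_neg hcase]
    rw [h1, ENNReal.mul_top (by simp [ENNReal.ofReal_eq_zero, not_le, hpq0])]
    exact le_top
  obtain ⟨hac, hint⟩ := hcase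
  set ν : Measure X := μ.bind (fun x => T x) with hνdef
  haveI hνP : IsProbabilityMeasure ν := my_isProb_bind μ T
  have hνac : ν ≪ π := by
    have h := my_bind_ac hac T
    rwa [hstat] at h
  set H : ℝ := ∫ x, llr μ π x ∂μ with hH
  have master : ∀ (φ : X → ℝ), Measurable φ → ∀ (C : ℝ), (∀ x, |φ x| ≤ C) →
      ∫ y, φ y ∂ν ≤ (p/q) * H + Real.log (∫ x, Real.exp (φ x) ∂π) :=
    fun φ hφ C hb => my_master π T p q hp hpq hHC μ hac hint hφ hb
  set f : X → ℝ := fun x => (ν.rnDeriv π x).toReal with hfdef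
  have hfme : Measurable f := (Measure.measurable_rnDeriv ν π).ennreal_toReal
  have hfnn : ∀ x, 0 ≤ f x := fun _ => ENNReal.toReal_nonneg
  have hfint : Integrable f π := Measure.integrable_toReal_rnDeriv
  have hfint1 : ∫ x, f x ∂π = 1 := by
    rw [hfdef, Measure.integral_toReal_rnDeriv hνac]
    simp
  have hllr : ∀ x, llr ν π x = Real.log (f x) := fun _ => rfl
  have hc0 : ∀ n : ℕ, (0:ℝ) < (n:ℝ)+1 := fun n => by positivity
  -- key inequality for each n
  have hIn : ∀ n : ℕ, ∫ x, myPhi f n x ∂ν ≤ (p/q) * H + Real.exp (-((n:ℝ)+1)) := by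
    intro n
    have h1 := master (myPhi f n) (myPhi_me hfme n) ((n:ℝ)+1) (myPhi_abs_le f n)
    have hle : ∀ x, Real.exp (myPhi f n x) ≤ f x + Real.exp (-((n:ℝ)+1)) := by
      intro x
      rw [myPhi_exp f n x]
      calc min (max (f x) (Real.exp (-((n:ℝ)+1)))) (Real.exp ((n:ℝ)+1))
          ≤ max (f x) (Real.exp (-((n:ℝ)+1))) := min_le_left _ _
        _ ≤ f x + Real.exp (-((n:ℝ)+1)) :=
            max_le (le_add_of_nonneg_right (Real.exp_pos _).le)
              (le_add_of_nonneg_left (hfnn x))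
    have hexpint : Integrable (fun x => Real.exp (myPhi f n x)) π := by
      refine my_int_of_bdd _ (myPhi_me hfme n).exp (C := Real.exp ((n:ℝ)+1)) fun x => ?_
      rw [abs_of_nonneg (Real.exp_pos _).le, myPhi_exp f n x]
      exact min_le_right _ _
    have hZ : ∫ x, Real.exp (myPhi f n x) ∂π ≤ 1 + Real.exp (-((n:ℝ)+1)) := by
      calc ∫ x, Real.exp (myPhi f n x) ∂π ≤ ∫ x, (f x + Real.exp (-((n:ℝ)+1))) ∂π :=
          integral_mono hexpint (hfint.add (integrable_const _)) hle
        _ = 1 + Real.exp (-((n:ℝ)+1)) := by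
            rw [integral_add hfint (integrable_const _), hfint1]
            simp
    have hZpos : 0 < ∫ x, Real.exp (myPhi f n x) ∂π := by
      have h2 : Real.exp (-((n:ℝ)+1)) = ∫ _x, Real.exp (-((n:ℝ)+1)) ∂π := by simp
      calc (0:ℝ) < Real.exp (-((n:ℝ)+1)) := Real.exp_pos _
        _ = ∫ _x, Real.exp (-((n:ℝ)+1)) ∂π := h2
        _ ≤ ∫ x, Real.exp (myPhi f n x) ∂π := by
            refine integral_mono (integrable_const _) hexpint fun x => ?_
            rw [myPhi_exp f n x]
            exact le_min (le_max_right _ _) (myPhi_eM n)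
    have hlog : Real.log (∫ x, Real.exp (myPhi f n x) ∂π) ≤ Real.exp (-((n:ℝ)+1)) := by
      calc Real.log (∫ x, Real.exp (myPhi f n x) ∂π)
          ≤ Real.log (1 + Real.exp (-((n:ℝ)+1))) := Real.log_le_log hZpos hZ
        _ ≤ (1 + Real.exp (-((n:ℝ)+1))) - 1 :=
            Real.log_le_sub_one_of_pos (by positivity)
        _ = Real.exp (-((n:ℝ)+1)) := by ring
    linarith
  -- a.e. clamp identity
  have hae : ∀ᵐ x ∂ν, 0 < f x := by
    filter_upwards [Measure.rnDeriv_pos hνac, hνac.ae_le (Measure.rnDeriv_lt_top ν π)]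
      with x h0 h1
    exact ENNReal.toReal_pos h0.ne' h1.ne
  have hclamp : ∀ᵐ x ∂ν, ∀ n : ℕ,
      myPhi f n x = max (min (llr ν π x) ((n:ℝ)+1)) (-((n:ℝ)+1)) := by
    filter_upwards [hae] with x hx
    intro n
    rw [myPhi_clamp hx n, hllr x]
  -- negative part bounds
  have hNn : ∀ n : ℕ, ∫⁻ x, ENNReal.ofReal (-(myPhi f n x)) ∂ν
      ≤ ENNReal.ofReal (Real.exp (-1)) := by
    intro n
    refine le_trans (lintegral_mono_ae ?_) (my_llr_negpart ν π hνac)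
    filter_upwards [hclamp] with x hx
    rw [hx n]
    exact ENNReal.ofReal_le_ofReal (my_clamp_neg (by linarith [hc0 n]))
  have hφint : ∀ n : ℕ, Integrable (myPhi f n) ν :=
    fun n => my_int_of_bdd _ (myPhi_me hfme n) (myPhi_abs_le f n)
  set K : ℝ := (p/q) * H + 1 + Real.exp (-1) with hK
  have hPn : ∀ n : ℕ, ∫⁻ x, ENNReal.ofReal (myPhi f n x) ∂ν ≤ ENNReal.ofReal K := by
    intro n
    have hfin : ∫⁻ x, ENNReal.ofReal (myPhi f n x) ∂ν ≠ ∞ := by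
      refine ne_of_lt (lt_of_le_of_lt (lintegral_mono fun x =>
        ENNReal.ofReal_le_ofReal (abs_le.mp (myPhi_abs_le f n x)).2) ?_)
      rw [lintegral_const, measure_univ, mul_one]
      exact ofReal_lt_top
    have hsplit := integral_eq_lintegral_pos_part_sub_lintegral_neg_part (hφint n)
    have h2 : (∫⁻ x, ENNReal.ofReal (-(myPhi f n x)) ∂ν).toReal ≤ Real.exp (-1) := by
      calc (∫⁻ x, ENNReal.ofReal (-(myPhi f n x)) ∂ν).toReal
          ≤ (ENNReal.ofReal (Real.exp (-1))).toReal :=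
            ENNReal.toReal_mono ofReal_ne_top (hNn n)
        _ = Real.exp (-1) := ENNReal.toReal_ofReal (Real.exp_pos _).le
    have h3 : Real.exp (-((n:ℝ)+1)) ≤ 1 :=
      Real.exp_le_one_iff.mpr (by linarith [hc0 n])
    have htR : (∫⁻ x, ENNReal.ofReal (myPhi f n x) ∂ν).toReal ≤ K := by
      have h4 := hIn n
      rw [hsplit] at h4
      rw [hK]
      linarith
    calc ∫⁻ x, ENNReal.ofReal (myPhi f n x) ∂ν
        = ENNReal.ofReal ((∫⁻ x, ENNReal.ofReal (myPhi f n x) ∂ν).toReal) :=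
          (ENNReal.ofReal_toReal hfin).symm
      _ ≤ ENNReal.ofReal K := ENNReal.ofReal_le_ofReal htR
  -- monotone convergence for the positive part
  have hmono_eq : ∀ n : ℕ, ∫⁻ x, ENNReal.ofReal (myPhi f n x) ∂ν
      = ∫⁻ x, ENNReal.ofReal (min (llr ν π x) ((n:ℝ)+1)) ∂ν := by
    intro n
    refine lintegral_congr_ae ?_
    filter_upwards [hclamp] with x hx
    rw [hx n, my_clamp_ofReal (by linarith [hc0 n])]
  have htendsto : Filter.Tendsto
      (fun n : ℕ => ∫⁻ x, ENNReal.ofReal (min (llr ν π x) ((n:ℝ)+1)) ∂ν)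
      Filter.atTop (nhds (∫⁻ x, ENNReal.ofReal (llr ν π x) ∂ν)) := by
    refine lintegral_tendsto_of_tendsto_of_monotone
      (fun n => ((measurable_llr _ _).min measurable_const).ennreal_ofReal.aemeasurable)
      (Filter.Eventually.of_forall fun x => ?_)
      (Filter.Eventually.of_forall fun x => ?_)
    · intro m n hmn
      refine ENNReal.ofReal_le_ofReal (min_le_min le_rfl ?_)
      have : (m:ℝ) ≤ (n:ℝ) := Nat.cast_le.mpr hmn
      linarith
    · have hev : ∀ᶠ n : ℕ in Filter.atTop,
          ENNReal.ofReal (min (llr ν π x) ((n:ℝ)+1)) = ENNReal.ofReal (llr ν π x) := by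
        filter_upwards [Filter.eventually_ge_atTop ⌈llr ν π x⌉₊] with n hn
        congr 1
        refine min_eq_left ?_
        calc llr ν π x ≤ (⌈llr ν π x⌉₊ : ℝ) := Nat.le_ceil _
          _ ≤ (n:ℝ) := Nat.cast_le.mpr hn
          _ ≤ (n:ℝ)+1 := by linarith
      exact Filter.Tendsto.congr' (hev.mono fun n h => h.symm) tendsto_const_nhds
  have hPpos : ∫⁻ x, ENNReal.ofReal (llr ν π x) ∂ν ≤ ENNReal.ofReal K := by
    refine le_of_tendsto' htendsto fun n => ?_
    rw [← hmono_eq n]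
    exact hPn n
  have hNpos : ∫⁻ x, ENNReal.ofReal (-(llr ν π x)) ∂ν ≤ ENNReal.ofReal (Real.exp (-1)) := by
    refine le_trans (lintegral_mono fun x => ?_) (my_llr_negpart ν π hνac)
    exact ENNReal.ofReal_le_ofReal (le_max_left _ _)
  have hllrint : Integrable (llr ν π) ν := by
    refine ⟨(measurable_llr _ _).aestronglyMeasurable, ?_⟩
    rw [hasFiniteIntegral_iff_norm]
    have heq : ∀ x, ENNReal.ofReal ‖llr ν π x‖ =
        ENNReal.ofReal (llr ν π x) + ENNReal.ofReal (-(llr ν π x)) := by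
      intro x
      rcases le_total (llr ν π x) 0 with h | h
      · rw [Real.norm_eq_abs, abs_of_nonpos h, ENNReal.ofReal_eq_zero.mpr h, zero_add]
      · rw [Real.norm_eq_abs, abs_of_nonneg h,
          ENNReal.ofReal_eq_zero.mpr (by linarith : -(llr ν π x) ≤ 0), add_zero]
    simp_rw [heq]
    rw [lintegral_add_left (measurable_llr _ _).ennreal_ofReal]
    calc ∫⁻ x, ENNReal.ofReal (llr ν π x) ∂ν + ∫⁻ x, ENNReal.ofReal (-(llr ν π x)) ∂ν
        ≤ ENNReal.ofReal K + ENNReal.ofReal (Real.exp (-1)) := add_le_add hPpos hNpos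
      _ < ∞ := by
        exact ENNReal.add_lt_top.mpr ⟨ofReal_lt_top, ofReal_lt_top⟩
  -- dominated convergence
  have hDCT : Filter.Tendsto (fun n : ℕ => ∫ x, myPhi f n x ∂ν) Filter.atTop
      (nhds (∫ x, llr ν π x ∂ν)) := by
    refine tendsto_integral_of_dominated_convergence (fun x => |llr ν π x|)
      (fun n => (myPhi_me hfme n).aestronglyMeasurable) hllrint.abs ?_ ?_
    · intro n
      filter_upwards [hclamp] with x hx
      rw [Real.norm_eq_abs, hx n]
      exact my_clamp_abs (by linarith [hc0 n])
    · filter_upwards [hclamp] with x hx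
      have hev : ∀ᶠ n : ℕ in Filter.atTop, myPhi f n x = llr ν π x := by
        filter_upwards [Filter.eventually_ge_atTop ⌈|llr ν π x|⌉₊] with n hn
        rw [hx n]
        have h1 : |llr ν π x| ≤ (n:ℝ)+1 := by
          calc |llr ν π x| ≤ (⌈|llr ν π x|⌉₊ : ℝ) := Nat.le_ceil _
            _ ≤ (n:ℝ) := Nat.cast_le.mpr hn
            _ ≤ (n:ℝ)+1 := by linarith
        rw [min_eq_left (abs_le.mp h1).2, max_eq_left (abs_le.mp h1).1]
      exact Filter.Tendsto.congr' (hev.mono fun n h => h.symm) tendsto_const_nhds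
  have hbound : Filter.Tendsto (fun n : ℕ => (p/q) * H + Real.exp (-((n:ℝ)+1)))
      Filter.atTop (nhds ((p/q) * H + 0)) := by
    refine Filter.Tendsto.const_add _ ?_
    have h1 : Filter.Tendsto (fun n : ℕ => -((n:ℝ)+1)) Filter.atTop Filter.atBot := by
      refine Filter.tendsto_neg_atBot_iff.mpr ?_
      exact Filter.tendsto_atTop_add_const_right _ 1 tendsto_natCast_atTop_atTop
    exact Real.tendsto_exp_atBot.comp h1
  have hfinal : ∫ x, llr ν π x ∂ν ≤ (p/q) * H := by
    have h := le_of_tendsto_of_tendsto' hDCT hbound fun n => hIn n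
    simpa using h
  have hKLν : klDiv ν π = ENNReal.ofReal (∫ x, llr ν π x ∂ν) := by
    rw [klDiv, if_pos ⟨hνac, hllrint⟩]
  have hKLμ : klDiv μ π = ENNReal.ofReal H := by
    rw [klDiv, if_pos ⟨hac, hint⟩]
  rw [hKLν, hKLμ, ← ENNReal.ofReal_mul hpq0.le]
  exact ENNReal.ofReal_le_ofReal hfinal
end

section
/- Let (X, 𝒜, π) be a probability space, β > 0, t ≥ 0, and let T be a Markov transition kernel on X preserving π (πT = π). Assume the hyper-contractivity estimate: for every nonnegative g ∈ L^2(π), ‖Tg‖_{L^{1+e^{4βt}}(π)} ≤ ‖g‖_{L^2(π)}. Then for every probability measure μ on X, H(μT | π) ≤ (2/(1+e^{4βt})) · H(μ | π), and in particular H(μT | π) ≤ e^{−2βt} · H(μ | π). -/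
open MeasureTheory ProbabilityTheory ENNReal Classical

section AuxLemmas

variable {X : Type*} [MeasurableSpace X]

lemma young_mul (u v : ℝ) (hu : 0 ≤ u) : u * v ≤ u * Real.log u - u + Real.exp v := by
  rcases eq_or_lt_of_le hu with h | h
  · simp [← h]; positivity
  · have h1 : v - Real.log u + 1 ≤ Real.exp (v - Real.log u) := Real.add_one_le_exp _
    have h2 : Real.exp (v - Real.log u) = Real.exp v / u := by
      rw [Real.exp_sub, Real.exp_log h]
    rw [h2] at h1
    have := mul_le_mul_of_nonneg_left h1 hu
    rw [mul_div_cancel₀ _ (ne_of_gt h)] at this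
    nlinarith

lemma neg_mul_log_le_one {u : ℝ} (hu : 0 ≤ u) : u * max (-Real.log u) 0 ≤ 1 := by
  rcases eq_or_lt_of_le hu with h | h
  · simp [← h]
  rcases le_or_gt 1 u with h1 | h1
  · have : Real.log u ≥ 0 := Real.log_nonneg h1
    rw [max_eq_right (by linarith)]; simp
  · have hl : 0 ≤ -Real.log u := by
      have := Real.log_nonpos hu h1.le; linarith
    rw [max_eq_left hl]
    have h1' : (-Real.log u - 1) + 1 ≤ Real.exp (-Real.log u - 1) := Real.add_one_le_exp _
    have h2 : Real.exp (-Real.log u - 1) = 1 / (u * Real.exp 1) := by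
      rw [Real.exp_sub, Real.exp_neg, Real.exp_log h]
      field_simp
    rw [h2] at h1'
    have he : (1:ℝ) ≤ Real.exp 1 := by
      have := Real.add_one_le_exp (1:ℝ); linarith
    have hue : 0 < u * Real.exp 1 := by positivity
    have h3 : -Real.log u ≤ 1 / (u * Real.exp 1) := by linarith
    have h4 : (-Real.log u) * (u * Real.exp 1) ≤ 1 := by
      calc (-Real.log u) * (u * Real.exp 1) ≤ (1 / (u * Real.exp 1)) * (u * Real.exp 1) :=
            mul_le_mul_of_nonneg_right h3 hue.le
        _ = 1 := by field_simp
    nlinarith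

lemma integrable_of_bdd {ρ : Measure X} [IsFiniteMeasure ρ]
    {f : X → ℝ} (hm : Measurable f) {C : ℝ} (h : ∀ x, |f x| ≤ C) : Integrable f ρ :=
  ⟨hm.aestronglyMeasurable, HasFiniteIntegral.of_bounded (C := C) (Filter.Eventually.of_forall h)⟩

lemma sm_Tg (T : Kernel X X) [IsSFiniteKernel T] {g : X → ℝ} (hg : Measurable g) :
    StronglyMeasurable fun x => ∫ y, g y ∂(T x) := by
  have : StronglyMeasurable (Function.uncurry fun (_ : X) (y : X) => g y) :=
    (hg.comp measurable_snd).stronglyMeasurable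
  exact this.integral_kernel_prod_right (κ := T)

instance prob_bind (μ : Measure X) [IsProbabilityMeasure μ] (T : Kernel X X) [IsMarkovKernel T] :
    IsProbabilityMeasure (μ.bind (fun x => T x)) := by
  constructor
  rw [Measure.bind_apply MeasurableSet.univ T.measurable.aemeasurable]
  simp

lemma integral_bind_nonneg (μ : Measure X) [IsProbabilityMeasure μ] (T : Kernel X X)
    [IsMarkovKernel T] {g : X → ℝ} (hg : Measurable g) (hgnn : ∀ x, 0 ≤ g x)
    {n : ℝ} (hb : ∀ x, |g x| ≤ n) :
    ∫ x, g x ∂(μ.bind (fun x => T x)) = ∫ x, ∫ y, g y ∂(T x) ∂μ := by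
  have hTg_nn : ∀ x, 0 ≤ ∫ y, g y ∂(T x) := fun x => integral_nonneg hgnn
  have hTg_bd : ∀ x, |∫ y, g y ∂(T x)| ≤ n := by
    intro x
    rw [abs_of_nonneg (hTg_nn x)]
    calc ∫ y, g y ∂(T x) ≤ ∫ _, n ∂(T x) := by
          refine integral_mono (integrable_of_bdd hg hb) (integrable_const n) ?_
          intro y; exact (abs_le.mp (hb y)).2
      _ = n := by simp
  rw [integral_eq_lintegral_of_nonneg_ae (Filter.Eventually.of_forall hgnn)
      hg.aestronglyMeasurable,
    Measure.lintegral_bind T.measurable.aemeasurable hg.ennreal_ofReal.aemeasurable]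
  have h1 : ∀ x, ∫⁻ y, ENNReal.ofReal (g y) ∂(T x) = ENNReal.ofReal (∫ y, g y ∂(T x)) := by
    intro x
    exact (ofReal_integral_eq_lintegral_ofReal (integrable_of_bdd hg hb)
      (Filter.Eventually.of_forall hgnn)).symm
  rw [lintegral_congr h1,
    ← integral_eq_lintegral_of_nonneg_ae (Filter.Eventually.of_forall hTg_nn)
      (sm_Tg T hg).aestronglyMeasurable]

lemma integral_bind_bdd (μ : Measure X) [IsProbabilityMeasure μ] (T : Kernel X X)
    [IsMarkovKernel T] {g : X → ℝ} (hg : Measurable g)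
    {n : ℝ} (hb : ∀ x, |g x| ≤ n) :
    ∫ x, g x ∂(μ.bind (fun x => T x)) = ∫ x, ∫ y, g y ∂(T x) ∂μ := by
  set gp := fun x => max (g x) 0 with hgp
  set gm := fun x => max (-g x) 0 with hgm
  have hgpm : Measurable gp := hg.max measurable_const
  have hgmm : Measurable gm := hg.neg.max measurable_const
  have hbp : ∀ x, |gp x| ≤ |n| := by
    intro x; rw [abs_of_nonneg (le_max_right _ _)]
    exact le_trans (max_le (le_abs_self _) (abs_nonneg _)) (le_trans (hb x) (le_abs_self n))
  have hbm : ∀ x, |gm x| ≤ |n| := by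
    intro x; rw [abs_of_nonneg (le_max_right _ _)]
    exact le_trans (max_le (neg_le_abs _) (abs_nonneg _)) (le_trans (hb x) (le_abs_self n))
  have hsub : g = fun x => gp x - gm x := by
    funext x; simp [hgp, hgm, max_zero_sub_max_neg_zero_eq_self]
  have hp := integral_bind_nonneg μ T hgpm (fun x => le_max_right _ _) hbp
  have hm := integral_bind_nonneg μ T hgmm (fun x => le_max_right _ _) hbm
  rw [hsub]
  rw [integral_sub (integrable_of_bdd hgpm hbp) (integrable_of_bdd hgmm hbm), hp, hm]
  rw [← integral_sub]
  · congr 1; funext x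
    rw [← integral_sub (integrable_of_bdd hgpm hbp) (integrable_of_bdd hgmm hbm)]
  · refine integrable_of_bdd (sm_Tg T hgpm).measurable (C := |n|) ?_
    intro x
    have hnn : (0:ℝ) ≤ ∫ y, gp y ∂(T x) := integral_nonneg fun y => le_max_right _ _
    rw [abs_of_nonneg hnn]
    calc ∫ y, gp y ∂(T x) ≤ ∫ _, |n| ∂(T x) :=
          integral_mono (integrable_of_bdd hgpm hbp) (integrable_const _)
            (fun y => (abs_le.mp (hbp y)).2)
      _ = |n| := by simp
  · refine integrable_of_bdd (sm_Tg T hgmm).measurable (C := |n|) ?_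
    intro x
    have hnn : (0:ℝ) ≤ ∫ y, gm y ∂(T x) := integral_nonneg fun y => le_max_right _ _
    rw [abs_of_nonneg hnn]
    calc ∫ y, gm y ∂(T x) ≤ ∫ _, |n| ∂(T x) :=
          integral_mono (integrable_of_bdd hgmm hbm) (integrable_const _)
            (fun y => (abs_le.mp (hbm y)).2)
      _ = |n| := by simp

lemma expHC (π : Measure X) [IsProbabilityMeasure π] {q : ℝ} (hq : 2 ≤ q)
    (T : Kernel X X) [IsMarkovKernel T]
    (hHC : ∀ g : X → ℝ, Measurable g → (∀ x, 0 ≤ g x) → MemLp g 2 π →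
      eLpNorm (fun x => ∫ y, g y ∂(T x)) (ENNReal.ofReal q) π ≤ eLpNorm g 2 π)
    {g : X → ℝ} (hg : Measurable g) {n : ℝ} (hb : ∀ x, |g x| ≤ n) :
    ∫ x, Real.exp ((q/2) * ∫ y, g y ∂(T x)) ∂π ≤ (∫ x, Real.exp (g x) ∂π) ^ (q/2) := by
  have hq0 : (0:ℝ) < q := lt_of_lt_of_le two_pos hq
  set u : X → ℝ := fun x => Real.exp (g x / 2) with hu_def
  have hum : Measurable u := (hg.div_const 2).exp
  have hub : ∀ x, |u x| ≤ Real.exp (n / 2) := by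
    intro x
    rw [abs_of_pos (Real.exp_pos _)]
    exact Real.exp_le_exp.mpr (by have := (abs_le.mp (hb x)).2; linarith)
  have hu_nn : ∀ x, 0 ≤ u x := fun x => (Real.exp_pos _).le
  have hu2 : MemLp u 2 π :=
    MemLp.of_bound hum.aestronglyMeasurable _ (Filter.Eventually.of_forall hub)
  have hE := hHC u hum hu_nn hu2
  set Tu : X → ℝ := fun x => ∫ y, u y ∂(T x) with hTu_def
  have hTum : Measurable Tu := (sm_Tg T hum).measurable
  have hTu_nn : ∀ x, 0 ≤ Tu x := fun x => integral_nonneg hu_nn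
  have hTu_bd : ∀ x, Tu x ≤ Real.exp (n / 2) := by
    intro x
    calc Tu x ≤ ∫ _, Real.exp (n / 2) ∂(T x) :=
          integral_mono (integrable_of_bdd hum hub) (integrable_const _)
            (fun y => (abs_le.mp (hub y)).2)
      _ = Real.exp (n / 2) := by simp
  -- Jensen
  have hjensen : ∀ x, Real.exp ((∫ y, g y ∂(T x)) / 2) ≤ Tu x := by
    intro x
    have h1 : (∫ y, g y ∂(T x)) / 2 = ∫ y, g y / 2 ∂(T x) := (integral_div 2 _).symm
    rw [h1]
    have h2 := convexOn_exp.map_integral_le (μ := T x) (f := fun y => g y / 2)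
      Real.continuous_exp.continuousOn isClosed_univ
      (Filter.Eventually.of_forall fun y => Set.mem_univ _)
      (integrable_of_bdd (hg.div_const 2) (C := n / 2)
        (fun y => by have := hb y; rw [abs_div, abs_two]; linarith))
      (integrable_of_bdd ((hg.div_const 2).exp) (C := Real.exp (n / 2))
        (fun y => by
          simp only [Function.comp]
          rw [abs_of_pos (Real.exp_pos _)]
          exact Real.exp_le_exp.mpr (by have := (abs_le.mp (hb y)).2; linarith)))
    exact h2
  -- pointwise comparison with (Tu)^q
  have hpt : ∀ x, Real.exp ((q/2) * ∫ y, g y ∂(T x)) ≤ Tu x ^ q := by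
    intro x
    have h1 : Real.exp ((q/2) * ∫ y, g y ∂(T x))
        = Real.exp ((∫ y, g y ∂(T x)) / 2) ^ q := by
      rw [← Real.exp_log (Real.rpow_pos_of_pos (Real.exp_pos _) q),
        Real.log_rpow (Real.exp_pos _), Real.log_exp]
      ring_nf
    rw [h1]
    exact Real.rpow_le_rpow (Real.exp_pos _).le (hjensen x) hq0.le
  -- bound Tg
  have hTg_bd : ∀ x, |∫ y, g y ∂(T x)| ≤ n := by
    intro x
    have h1 : ∫ y, g y ∂(T x) ≤ n := by
      calc ∫ y, g y ∂(T x) ≤ ∫ _, n ∂(T x) :=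
            integral_mono (integrable_of_bdd hg hb) (integrable_const _)
              (fun y => (abs_le.mp (hb y)).2)
        _ = n := by simp
    have h2 : -n ≤ ∫ y, g y ∂(T x) := by
      calc (-n : ℝ) = ∫ _, (-n : ℝ) ∂(T x) := by simp
        _ ≤ ∫ y, g y ∂(T x) :=
            integral_mono (integrable_const _) (integrable_of_bdd hg hb)
              (fun y => (abs_le.mp (hb y)).1)
    exact abs_le.mpr ⟨h2, h1⟩
  -- integrate
  have hmono : ∫ x, Real.exp ((q/2) * ∫ y, g y ∂(T x)) ∂π ≤ ∫ x, Tu x ^ q ∂π := by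
    refine integral_mono ?_ ?_ hpt
    · refine integrable_of_bdd (((sm_Tg T hg).measurable.const_mul (q/2)).exp)
        (C := Real.exp ((q/2) * n)) ?_
      intro x
      rw [abs_of_pos (Real.exp_pos _)]
      refine Real.exp_le_exp.mpr ?_
      exact mul_le_mul_of_nonneg_left (abs_le.mp (hTg_bd x)).2 (by positivity)
    · refine integrable_of_bdd (f := fun x => Tu x ^ q) ((Real.continuous_rpow_const hq0.le).measurable.comp hTum) (C := Real.exp (n / 2) ^ q) ?_
      intro x
      rw [abs_of_nonneg (Real.rpow_nonneg (hTu_nn x) q)]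
      exact Real.rpow_le_rpow (hTu_nn x) (hTu_bd x) hq0.le
  -- eLpNorm conversion
  have hq_ne : (ENNReal.ofReal q) ≠ 0 := by
    simp [ENNReal.ofReal_eq_zero, not_le, hq0]
  have hqt : (ENNReal.ofReal q).toReal = q := ENNReal.toReal_ofReal hq0.le
  rw [eLpNorm_eq_lintegral_rpow_enorm_toReal hq_ne ENNReal.ofReal_ne_top,
    eLpNorm_eq_lintegral_rpow_enorm_toReal (by norm_num) (by norm_num), hqt] at hE
  have h2t : (2 : ℝ≥0∞).toReal = (2:ℝ) := by norm_num
  rw [h2t] at hE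
  set A : ℝ≥0∞ := ∫⁻ x, ‖Tu x‖ₑ ^ q ∂π with hA_def
  set B : ℝ≥0∞ := ∫⁻ x, ‖u x‖ₑ ^ (2:ℝ) ∂π with hB_def
  have hAB : A ≤ B ^ (q / 2) := by
    have h1 : A = (A ^ (1/q)) ^ q := by
      rw [← ENNReal.rpow_mul, one_div, inv_mul_cancel₀ (ne_of_gt hq0), ENNReal.rpow_one]
    rw [h1]
    have h2 : (B ^ ((1:ℝ)/2)) ^ q = B ^ (q/2) := by
      rw [← ENNReal.rpow_mul]
      congr 1; ring
    rw [← h2]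
    exact ENNReal.rpow_le_rpow hE hq0.le
  have hA_eq : A = ENNReal.ofReal (∫ x, Tu x ^ q ∂π) := by
    have h1 : ∀ x, ‖Tu x‖ₑ ^ q = ENNReal.ofReal (Tu x ^ q) := by
      intro x
      rw [← ofReal_norm, Real.norm_eq_abs, abs_of_nonneg (hTu_nn x),
        ENNReal.ofReal_rpow_of_nonneg (hTu_nn x) hq0.le]
    rw [hA_def, lintegral_congr h1,
      ← ofReal_integral_eq_lintegral_ofReal
        (integrable_of_bdd (f := fun x => Tu x ^ q) ((Real.continuous_rpow_const hq0.le).measurable.comp hTum) (C := Real.exp (n / 2) ^ q)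
          (fun x => by
            rw [abs_of_nonneg (Real.rpow_nonneg (hTu_nn x) q)]
            exact Real.rpow_le_rpow (hTu_nn x) (hTu_bd x) hq0.le))
        (Filter.Eventually.of_forall fun x => Real.rpow_nonneg (hTu_nn x) q)]
  have hB_eq : B = ENNReal.ofReal (∫ x, Real.exp (g x) ∂π) := by
    have h1 : ∀ x, ‖u x‖ₑ ^ (2:ℝ) = ENNReal.ofReal (Real.exp (g x)) := by
      intro x
      rw [← ofReal_norm, Real.norm_eq_abs, abs_of_nonneg (hu_nn x),
        ENNReal.ofReal_rpow_of_nonneg (hu_nn x) (by norm_num)]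
      congr 1
      rw [← Real.exp_log (Real.rpow_pos_of_pos (Real.exp_pos _) _),
        Real.log_rpow (Real.exp_pos _), Real.log_exp]
      ring_nf
    rw [hB_def, lintegral_congr h1,
      ← ofReal_integral_eq_lintegral_ofReal
        (integrable_of_bdd hg.exp (C := Real.exp n)
          (fun x => by
            rw [abs_of_pos (Real.exp_pos _)]
            exact Real.exp_le_exp.mpr (abs_le.mp (hb x)).2))
        (Filter.Eventually.of_forall fun x => (Real.exp_pos _).le)]
  rw [hA_eq, hB_eq, ENNReal.ofReal_rpow_of_nonneg
      (integral_nonneg fun x => (Real.exp_pos _).le) (by positivity)] at hAB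
  have hfin : ∫ x, Tu x ^ q ∂π ≤ (∫ x, Real.exp (g x) ∂π) ^ (q/2) :=
    (ENNReal.ofReal_le_ofReal_iff
      (Real.rpow_nonneg (integral_nonneg fun x => (Real.exp_pos _).le) _)).mp hAB
  exact le_trans hmono hfin

lemma Tg_abs_le (T : Kernel X X) [IsMarkovKernel T] {g : X → ℝ} (hg : Measurable g)
    {n : ℝ} (hb : ∀ x, |g x| ≤ n) : ∀ x, |∫ y, g y ∂(T x)| ≤ n := by
  intro x
  have h1 : ∫ y, g y ∂(T x) ≤ n := by
    calc ∫ y, g y ∂(T x) ≤ ∫ _, n ∂(T x) :=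
          integral_mono (integrable_of_bdd hg hb) (integrable_const _)
            (fun y => (abs_le.mp (hb y)).2)
      _ = n := by simp
  have h2 : -n ≤ ∫ y, g y ∂(T x) := by
    calc (-n : ℝ) = ∫ _, (-n : ℝ) ∂(T x) := by simp
      _ ≤ ∫ y, g y ∂(T x) :=
          integral_mono (integrable_const _) (integrable_of_bdd hg hb)
            (fun y => (abs_le.mp (hb y)).1)
  exact abs_le.mpr ⟨h2, h1⟩

lemma keyA (π : Measure X) [IsProbabilityMeasure π] {q : ℝ} (hq : 2 ≤ q)
    (T : Kernel X X) [IsMarkovKernel T]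
    (hHC : ∀ g : X → ℝ, Measurable g → (∀ x, 0 ≤ g x) → MemLp g 2 π →
      eLpNorm (fun x => ∫ y, g y ∂(T x)) (ENNReal.ofReal q) π ≤ eLpNorm g 2 π)
    (μ : Measure X) [IsProbabilityMeasure μ] (hac : μ ≪ π) (hint : Integrable (llr μ π) μ)
    {g : X → ℝ} (hg : Measurable g) {n : ℝ} (hb : ∀ x, |g x| ≤ n) :
    ∫ x, g x ∂(μ.bind (fun x => T x))
      ≤ (2/q) * ((∫ x, llr μ π x ∂μ) - 1 + (∫ x, Real.exp (g x) ∂π) ^ (q/2)) := by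
  have hq0 : (0:ℝ) < q := lt_of_lt_of_le two_pos hq
  set f : X → ℝ := fun x => (μ.rnDeriv π x).toReal with hf_def
  have hfm : Measurable f := (Measure.measurable_rnDeriv μ π).ennreal_toReal
  have hf_nn : ∀ x, 0 ≤ f x := fun x => ENNReal.toReal_nonneg
  have hf_int : Integrable f π := Measure.integrable_toReal_rnDeriv
  have hflog : Integrable (fun x => f x * Real.log (f x)) π := by
    have h1 : Integrable (fun x => f x • llr μ π x) π :=
      (integrable_rnDeriv_smul_iff hac).mpr hint
    simpa [llr, smul_eq_mul] using h1
  set Tg : X → ℝ := fun x => ∫ y, g y ∂(T x) with hTg_def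
  have hTgm : Measurable Tg := (sm_Tg T hg).measurable
  have hTg_bd : ∀ x, |Tg x| ≤ n := Tg_abs_le T hg hb
  set v : X → ℝ := fun x => (q/2) * Tg x with hv_def
  have hvm : Measurable v := hTgm.const_mul _
  have hv_bd : ∀ x, |v x| ≤ (q/2) * n := by
    intro x
    rw [abs_mul, abs_of_pos (by positivity : (0:ℝ) < q/2)]
    exact mul_le_mul_of_nonneg_left (hTg_bd x) (by positivity)
  have hev_int : Integrable (fun x => Real.exp (v x)) π := by
    refine integrable_of_bdd hvm.exp (C := Real.exp ((q/2) * n)) ?_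
    intro x
    rw [abs_of_pos (Real.exp_pos _)]
    exact Real.exp_le_exp.mpr (abs_le.mp (hv_bd x)).2
  have hvf_int : Integrable (fun x => v x * f x) π :=
    hf_int.bdd_mul (c := (q/2) * n) hvm.aestronglyMeasurable (Filter.Eventually.of_forall fun x => hv_bd x)
  -- Young
  have hyoung : ∀ x, v x * f x ≤ f x * Real.log (f x) - f x + Real.exp (v x) := by
    intro x
    have := young_mul (f x) (v x) (hf_nn x)
    linarith [this]
  have hint1 : ∫ x, v x * f x ∂π
      ≤ ∫ x, (f x * Real.log (f x) - f x + Real.exp (v x)) ∂π :=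
    integral_mono hvf_int ((hflog.sub hf_int).add hev_int) hyoung
  have hsplit : ∫ x, (f x * Real.log (f x) - f x + Real.exp (v x)) ∂π
      = (∫ x, f x * Real.log (f x) ∂π) - (∫ x, f x ∂π) + ∫ x, Real.exp (v x) ∂π := by
    have h1 : Integrable (fun x => f x * Real.log (f x) - f x) π := hflog.sub hf_int
    rw [integral_add h1 hev_int, integral_sub hflog hf_int]
  have hH : ∫ x, f x * Real.log (f x) ∂π = ∫ x, llr μ π x ∂μ := by
    have h1 := integral_rnDeriv_smul (E := ℝ) hac (f := llr μ π)
    simpa [llr, smul_eq_mul] using h1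
  have hf1 : ∫ x, f x ∂π = 1 := by
    rw [hf_def, Measure.integral_toReal_rnDeriv hac]
    simp
  have hexp : ∫ x, Real.exp (v x) ∂π ≤ (∫ x, Real.exp (g x) ∂π) ^ (q/2) :=
    expHC π hq T hHC hg hb
  -- LHS identities
  have hlhs1 : ∫ x, v x * f x ∂π = (q/2) * ∫ x, f x * Tg x ∂π := by
    rw [← integral_const_mul]
    congr 1; funext x; rw [hv_def]; ring
  have hlhs2 : ∫ x, f x * Tg x ∂π = ∫ x, Tg x ∂μ := by
    have h1 := integral_rnDeriv_smul (E := ℝ) hac (f := Tg)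
    simpa [smul_eq_mul] using h1
  have hbind : ∫ x, g x ∂(μ.bind (fun x => T x)) = ∫ x, Tg x ∂μ :=
    integral_bind_bdd μ T hg hb
  have hmain : (q/2) * ∫ x, g x ∂(μ.bind (fun x => T x))
      ≤ (∫ x, llr μ π x ∂μ) - 1 + (∫ x, Real.exp (g x) ∂π) ^ (q/2) := by
    rw [hbind, ← hlhs2, ← hlhs1]
    rw [hsplit, hH, hf1] at hint1
    linarith
  have h2q : (0:ℝ) < 2/q := by positivity
  have := mul_le_mul_of_nonneg_left hmain h2q.le
  calc ∫ x, g x ∂(μ.bind (fun x => T x))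
      = (2/q) * ((q/2) * ∫ x, g x ∂(μ.bind (fun x => T x))) := by field_simp
    _ ≤ (2/q) * ((∫ x, llr μ π x ∂μ) - 1 + (∫ x, Real.exp (g x) ∂π) ^ (q/2)) := this

lemma bind_ac (π : Measure X) [IsProbabilityMeasure π] (T : Kernel X X) [IsMarkovKernel T]
    (hstat : π.bind (fun x => T x) = π) (μ : Measure X) [IsProbabilityMeasure μ]
    (hac : μ ≪ π) : μ.bind (fun x => T x) ≪ π := by
  refine Measure.AbsolutelyContinuous.mk fun A hA hA0 => ?_
  have h1 : ∫⁻ x, T x A ∂π = 0 := by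
    have h := congrArg (fun m : Measure X => m A) hstat
    simpa [Measure.bind_apply hA T.measurable.aemeasurable, hA0] using h
  have h2 : ∀ᵐ x ∂π, T x A = 0 := by
    rw [lintegral_eq_zero_iff (T.measurable_coe hA)] at h1
    exact h1
  have h3 : ∀ᵐ x ∂μ, T x A = 0 := hac.ae_le h2
  rw [Measure.bind_apply hA T.measurable.aemeasurable]
  exact lintegral_eq_zero_iff' ((T.measurable_coe hA).aemeasurable) |>.mpr h3

lemma min_llr_integrable (π : Measure X) [IsProbabilityMeasure π] (ν : Measure X)
    [IsProbabilityMeasure ν] (hν : ν ≪ π) :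
    Integrable (fun x => min (llr ν π x) 0) ν ∧
      ∫ x, |min (llr ν π x) 0| ∂ν ≤ 1 := by
  set w : X → ℝ := fun x => min (llr ν π x) 0 with hw_def
  have hwm : Measurable w := (measurable_llr ν π).min measurable_const
  have habs : ∀ x, |w x| = max (-Real.log ((ν.rnDeriv π x).toReal)) 0 := by
    intro x
    have hllr : llr ν π x = Real.log ((ν.rnDeriv π x).toReal) := rfl
    rcases le_total (llr ν π x) 0 with h|h
    · rw [hw_def]
      simp only []
      rw [min_eq_left h, abs_of_nonpos h, ← hllr, max_eq_left (by linarith)]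
    · rw [hw_def]
      simp only []
      rw [min_eq_right h, abs_zero, ← hllr, max_eq_right (by linarith)]
  have hle : ∫⁻ x, ‖w x‖ₑ ∂ν ≤ 1 := by
    rw [← lintegral_rnDeriv_mul hν (hwm.enorm.aemeasurable)]
    calc ∫⁻ x, ν.rnDeriv π x * ‖w x‖ₑ ∂π ≤ ∫⁻ _, 1 ∂π := by
          refine lintegral_mono_ae ?_
          filter_upwards [Measure.rnDeriv_lt_top ν π] with x hx
          set u := (ν.rnDeriv π x).toReal with hu_def
          have hu : 0 ≤ u := ENNReal.toReal_nonneg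
          have hk : ν.rnDeriv π x = ENNReal.ofReal u := by
            rw [hu_def, ENNReal.ofReal_toReal hx.ne]
          rw [hk, ← ofReal_norm, Real.norm_eq_abs, habs x,
            ← ENNReal.ofReal_mul hu]
          exact ENNReal.ofReal_le_one.mpr (neg_mul_log_le_one hu)
      _ = 1 := by simp
  have hint : Integrable w ν := ⟨hwm.aestronglyMeasurable, lt_of_le_of_lt hle one_lt_top⟩
  refine ⟨hint, ?_⟩
  rw [integral_eq_lintegral_of_nonneg_ae (Filter.Eventually.of_forall fun x => abs_nonneg _)
    hwm.abs.aestronglyMeasurable]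
  have : ∫⁻ x, ENNReal.ofReal |w x| ∂ν ≤ 1 := by
    calc ∫⁻ x, ENNReal.ofReal |w x| ∂ν = ∫⁻ x, ‖w x‖ₑ ∂ν := by
          congr 1; funext x; rw [← ofReal_norm, Real.norm_eq_abs]
      _ ≤ 1 := hle
  calc (∫⁻ x, ENNReal.ofReal |w x| ∂ν).toReal ≤ (1 : ℝ≥0∞).toReal :=
        ENNReal.toReal_mono one_ne_top this
    _ = 1 := by simp

lemma rnDeriv_zero_set (π : Measure X) [IsProbabilityMeasure π] (ν : Measure X)
    [IsProbabilityMeasure ν] (hν : ν ≪ π) :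
    ν {x | ν.rnDeriv π x = 0} = 0 := by
  have hS : MeasurableSet {x | ν.rnDeriv π x = 0} :=
    Measure.measurable_rnDeriv ν π (measurableSet_singleton 0)
  have key := Measure.withDensity_rnDeriv_eq ν π hν
  have h0 : (π.withDensity (ν.rnDeriv π)) {x | ν.rnDeriv π x = 0} = 0 := by
    rw [withDensity_apply _ hS]
    calc ∫⁻ x in {x | ν.rnDeriv π x = 0}, ν.rnDeriv π x ∂π
      = ∫⁻ _ in {x | ν.rnDeriv π x = 0}, 0 ∂π :=
          setLIntegral_congr_fun hS (fun x hx => hx)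
      _ = 0 := by simp
  rw [key] at h0
  exact h0

end AuxLemmas

/-- Gross-type hypercontractivity `‖Tg‖_{1+e^{4βt}} ≤ ‖g‖_2` at the fixed time `t` implies
the entropy contraction `H(μT | π) ≤ 2/(1+e^{4βt}) H(μ | π)`, and in particular
`H(μT | π) ≤ e^{-2βt} H(μ | π)`. -/
theorem gross_hypercontractivity_entropy_contraction
    {X : Type*} [MeasurableSpace X] (π : Measure X) [IsProbabilityMeasure π]
    (β t : ℝ) (hβ : 0 < β) (ht : 0 ≤ t)
    (T : Kernel X X) [IsMarkovKernel T]
    (hstat : π.bind (fun x => T x) = π)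
    (hHC : ∀ g : X → ℝ, Measurable g → (∀ x, 0 ≤ g x) → MemLp g 2 π →
      eLpNorm (fun x => ∫ y, g y ∂(T x)) (ENNReal.ofReal (1 + Real.exp (4 * β * t))) π
        ≤ eLpNorm g 2 π)
    (μ : Measure X) [IsProbabilityMeasure μ] :
    klDiv (μ.bind (fun x => T x)) π
        ≤ ENNReal.ofReal (2 / (1 + Real.exp (4 * β * t))) * klDiv μ π ∧
      klDiv (μ.bind (fun x => T x)) π
        ≤ ENNReal.ofReal (Real.exp (-(2 * β * t))) * klDiv μ π := by
  set q : ℝ := 1 + Real.exp (4 * β * t) with hq_def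
  have hexp1 : 1 ≤ Real.exp (4 * β * t) := Real.one_le_exp (by positivity)
  have hq2 : (2:ℝ) ≤ q := by rw [hq_def]; linarith
  have hq0 : (0:ℝ) < q := lt_of_lt_of_le two_pos hq2
  set ν : Measure X := μ.bind (fun x => T x) with hν_def
  haveI hνprob : IsProbabilityMeasure ν := by rw [hν_def]; infer_instance
  have hcoef : 2 / q ≤ Real.exp (-(2 * β * t)) := by
    have hs0 : (0:ℝ) < Real.exp (2 * β * t) := Real.exp_pos _
    have hsq : Real.exp (4 * β * t) = Real.exp (2 * β * t) * Real.exp (2 * β * t) := by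
      rw [← Real.exp_add]; ring_nf
    rw [Real.exp_neg, ← one_div, div_le_div_iff₀ hq0 hs0]
    nlinarith [sq_nonneg (Real.exp (2 * β * t) - 1)]
  suffices h1 : klDiv ν π ≤ ENNReal.ofReal (2 / q) * klDiv μ π by
    exact ⟨h1, le_trans h1 (mul_le_mul_left (ENNReal.ofReal_le_ofReal hcoef) _)⟩
  by_cases hcase : μ ≪ π ∧ Integrable (llr μ π) μ
  case neg =>
    have hμtop : klDiv μ π = ∞ := by rw [klDiv, if_neg hcase]
    have h2 : ENNReal.ofReal (2 / q) * (∞ : ℝ≥0∞) = ∞ :=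
      ENNReal.mul_top (by
        simp only [ne_eq, ENNReal.ofReal_eq_zero, not_le]
        positivity)
    rw [hμtop, h2]
    exact le_top
  case pos =>
  obtain ⟨hac, hintμ⟩ := hcase
  set H : ℝ := ∫ x, llr μ π x ∂μ with hH_def
  have hνac : ν ≪ π := bind_ac π T hstat μ hac
  obtain ⟨hwint, hwbd⟩ := min_llr_integrable π ν hνac
  have hS0 : ν {x | ν.rnDeriv π x = 0} = 0 := rnDeriv_zero_set π ν hνac
  have hSmeas : MeasurableSet {x | ν.rnDeriv π x = 0} :=
    Measure.measurable_rnDeriv ν π (measurableSet_singleton 0)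
  have hae_ne : ∀ᵐ x ∂ν, ν.rnDeriv π x ≠ 0 := by
    refine (ae_iff).mpr ?_
    simp only [ne_eq, not_not]
    exact hS0
  -- the truncated test functions
  set a : ℕ → X → ℝ := fun n x => max (min (llr ν π x) n) (-(n:ℝ)) with ha_def
  set G : ℕ → X → ℝ := fun n x =>
    if ν.rnDeriv π x = 0 then -(n:ℝ) else a n x with hG_def
  have ham : ∀ n, Measurable (a n) :=
    fun n => ((measurable_llr ν π).min measurable_const).max measurable_const
  have hGm : ∀ n, Measurable (G n) := fun n =>
    Measurable.ite hSmeas measurable_const (ham n)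
  have ha_bd : ∀ n x, |a n x| ≤ (n:ℝ) := by
    intro n x
    refine abs_le.mpr ⟨le_max_right _ _, max_le (min_le_right _ _)
      (neg_le_self (Nat.cast_nonneg n))⟩
  have hG_bd : ∀ n x, |G n x| ≤ (n:ℝ) := by
    intro n x
    simp only [hG_def]
    by_cases h : ν.rnDeriv π x = 0
    · rw [if_pos h]; simp
    · rw [if_neg h]; exact ha_bd n x
  -- bound on the exponential moment of G n
  have hfν_int : Integrable (fun x => (ν.rnDeriv π x).toReal) π :=
    Measure.integrable_toReal_rnDeriv
  have hCn : ∀ n : ℕ, ∫ x, Real.exp (G n x) ∂π ≤ 1 + Real.exp (-(n:ℝ)) := by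
    intro n
    have hpt : ∀ᵐ x ∂π, Real.exp (G n x) ≤ (ν.rnDeriv π x).toReal + Real.exp (-(n:ℝ)) := by
      filter_upwards [Measure.rnDeriv_lt_top ν π] with x hx
      simp only [hG_def, ha_def]
      by_cases h : ν.rnDeriv π x = 0
      · rw [if_pos h]
        have h0 : (0:ℝ) ≤ (ν.rnDeriv π x).toReal := ENNReal.toReal_nonneg
        linarith
      · rw [if_neg h]
        have hu_pos : 0 < (ν.rnDeriv π x).toReal := ENNReal.toReal_pos h hx.ne
        have hllr : llr ν π x = Real.log ((ν.rnDeriv π x).toReal) := rfl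
        rw [hllr]
        have he : (0:ℝ) < Real.exp (-(n:ℝ)) := Real.exp_pos _
        rcases le_total (-(n:ℝ)) (Real.log ((ν.rnDeriv π x).toReal)) with hc | hc
        · have h1 : max (min (Real.log ((ν.rnDeriv π x).toReal)) (n:ℝ)) (-(n:ℝ))
              ≤ Real.log ((ν.rnDeriv π x).toReal) := max_le (min_le_left _ _) hc
          have h2 := Real.exp_le_exp.mpr h1
          rw [Real.exp_log hu_pos] at h2
          linarith
        · have h1 : max (min (Real.log ((ν.rnDeriv π x).toReal)) (n:ℝ)) (-(n:ℝ)) = -(n:ℝ) := by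
            rw [min_eq_left (hc.trans (neg_le_self (Nat.cast_nonneg n))), max_eq_right hc]
          rw [h1]
          linarith
    have hlhs_int : Integrable (fun x => Real.exp (G n x)) π := by
      refine integrable_of_bdd ((hGm n).exp) (C := Real.exp (n:ℝ)) ?_
      intro x
      rw [abs_of_pos (Real.exp_pos _)]
      exact Real.exp_le_exp.mpr (abs_le.mp (hG_bd n x)).2
    calc ∫ x, Real.exp (G n x) ∂π
        ≤ ∫ x, ((ν.rnDeriv π x).toReal + Real.exp (-(n:ℝ))) ∂π :=
          integral_mono_ae hlhs_int (hfν_int.add (integrable_const _)) hpt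
      _ = 1 + Real.exp (-(n:ℝ)) := by
          rw [integral_add hfν_int (integrable_const _), Measure.integral_toReal_rnDeriv hνac]
          simp
  -- the key per-n inequality
  have hkey : ∀ n : ℕ,
      ∫ x, a n x ∂ν ≤ (2/q) * (H - 1 + (1 + Real.exp (-(n:ℝ))) ^ (q/2)) := by
    intro n
    have h1 := keyA π hq2 T hHC μ hac hintμ (hGm n) (hG_bd n)
    have h2 : ∫ x, G n x ∂ν = ∫ x, a n x ∂ν := by
      refine integral_congr_ae ?_
      filter_upwards [hae_ne] with x hx
      simp only [hG_def]
      rw [if_neg hx]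
    have h3 : (∫ x, Real.exp (G n x) ∂π) ^ (q/2) ≤ (1 + Real.exp (-(n:ℝ))) ^ (q/2) :=
      Real.rpow_le_rpow (integral_nonneg fun x => (Real.exp_pos _).le) (hCn n) (by positivity)
    have h4 : (0:ℝ) ≤ 2/q := by positivity
    calc ∫ x, a n x ∂ν = ∫ x, G n x ∂ν := h2.symm
      _ ≤ (2/q) * (H - 1 + (∫ x, Real.exp (G n x) ∂π) ^ (q/2)) := h1
      _ ≤ (2/q) * (H - 1 + (1 + Real.exp (-(n:ℝ))) ^ (q/2)) := by
          refine mul_le_mul_of_nonneg_left ?_ h4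
          linarith
  have haint : ∀ n : ℕ, Integrable (a n) ν := fun n => integrable_of_bdd (ham n) (ha_bd n)
  -- decomposition of a n into positive and negative truncations
  set P : X → ℝ := fun x => max (llr ν π x) 0 with hP_def
  have hPm : Measurable P := (measurable_llr ν π).max measurable_const
  have hdecomp : ∀ (n : ℕ) (x : X),
      a n x = min (P x) (n:ℝ) + max (min (llr ν π x) 0) (-(n:ℝ)) := by
    intro n x
    have hn0 : (0:ℝ) ≤ (n:ℝ) := Nat.cast_nonneg n
    simp only [ha_def, hP_def]
    rcases le_total (llr ν π x) 0 with h | h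
    · rw [min_eq_left (h.trans hn0), max_eq_right h, min_eq_left hn0, min_eq_left h]
      ring
    · rw [max_eq_left h, min_eq_right h,
        max_eq_left (le_trans (neg_nonpos.mpr hn0) (le_min h hn0)),
        max_eq_left (neg_nonpos.mpr hn0)]
      ring
  have hbint : ∀ n : ℕ, Integrable (fun x => max (min (llr ν π x) 0) (-(n:ℝ))) ν := by
    intro n
    refine integrable_of_bdd (((measurable_llr ν π).min measurable_const).max measurable_const)
      (C := (n:ℝ)) ?_
    intro x
    have hn0 : (0:ℝ) ≤ (n:ℝ) := Nat.cast_nonneg n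
    refine abs_le.mpr ⟨le_max_right _ _,
      le_trans (max_le (min_le_right _ _) (neg_nonpos.mpr hn0)) hn0⟩
  have hpint : ∀ n : ℕ, Integrable (fun x => min (P x) (n:ℝ)) ν := by
    intro n
    refine integrable_of_bdd (hPm.min measurable_const) (C := (n:ℝ)) ?_
    intro x
    have hn0 : (0:ℝ) ≤ (n:ℝ) := Nat.cast_nonneg n
    refine abs_le.mpr ⟨?_, min_le_right _ _⟩
    refine le_trans (neg_nonpos.mpr hn0) (le_min ?_ hn0)
    exact le_max_right _ _
  have hw_ge : -1 ≤ ∫ x, min (llr ν π x) 0 ∂ν := by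
    have h1 : ∫ x, -|min (llr ν π x) 0| ∂ν ≤ ∫ x, min (llr ν π x) 0 ∂ν :=
      integral_mono hwint.abs.neg hwint (fun x => neg_abs_le _)
    rw [integral_neg] at h1
    linarith
  have hbn_ge : ∀ n : ℕ, -1 ≤ ∫ x, max (min (llr ν π x) 0) (-(n:ℝ)) ∂ν := by
    intro n
    have h1 : ∫ x, min (llr ν π x) 0 ∂ν ≤ ∫ x, max (min (llr ν π x) 0) (-(n:ℝ)) ∂ν :=
      integral_mono hwint (hbint n) (fun x => le_max_left _ _)
    linarith
  set B : ℝ := (2/q) * (H - 1 + 2 ^ (q/2)) + 1 with hB_def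
  have hpB : ∀ n : ℕ, ∫ x, min (P x) (n:ℝ) ∂ν ≤ B := by
    intro n
    have hn0 : (0:ℝ) ≤ (n:ℝ) := Nat.cast_nonneg n
    have hsplit : ∫ x, a n x ∂ν
        = ∫ x, min (P x) (n:ℝ) ∂ν + ∫ x, max (min (llr ν π x) 0) (-(n:ℝ)) ∂ν := by
      rw [← integral_add (hpint n) (hbint n)]
      exact integral_congr_ae (Filter.Eventually.of_forall fun x => hdecomp n x)
    have h2 : (1 + Real.exp (-(n:ℝ))) ^ (q/2) ≤ (2:ℝ) ^ (q/2) := by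
      refine Real.rpow_le_rpow (by positivity) ?_ (by positivity)
      have : Real.exp (-(n:ℝ)) ≤ 1 := Real.exp_le_one_iff.mpr (by simpa using hn0)
      linarith
    have h3 := hkey n
    have h4 : (0:ℝ) ≤ 2/q := by positivity
    have h5 : (2/q) * (H - 1 + (1 + Real.exp (-(n:ℝ))) ^ (q/2))
        ≤ (2/q) * (H - 1 + 2 ^ (q/2)) := by
      refine mul_le_mul_of_nonneg_left (by linarith) h4
    have h6 := hbn_ge n
    rw [hsplit] at h3
    rw [hB_def]
    linarith
  -- monotone convergence for the positive part
  have hsupP : ∀ x, ENNReal.ofReal (P x) = ⨆ n : ℕ, ENNReal.ofReal (min (P x) (n:ℝ)) := by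
    intro x
    refine le_antisymm ?_ (iSup_le fun n => ENNReal.ofReal_le_ofReal (min_le_left _ _))
    refine le_iSup_of_le ⌈P x⌉₊ (ENNReal.ofReal_le_ofReal ?_)
    rw [min_eq_left (Nat.le_ceil _)]
  have hmct : ∫⁻ x, ENNReal.ofReal (P x) ∂ν ≤ ENNReal.ofReal B := by
    rw [lintegral_congr hsupP,
      lintegral_iSup (fun n => (hPm.min measurable_const).ennreal_ofReal)
        (fun m n h x => ENNReal.ofReal_le_ofReal
          (min_le_min le_rfl (Nat.cast_le.mpr h)))]
    refine iSup_le fun n => ?_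
    rw [← ofReal_integral_eq_lintegral_ofReal (hpint n)
      (Filter.Eventually.of_forall fun x =>
        le_min (le_max_right _ _) (Nat.cast_nonneg n))]
    exact ENNReal.ofReal_le_ofReal (hpB n)
  have hPint : Integrable P ν := by
    refine ⟨hPm.aestronglyMeasurable, ?_⟩
    have h1 : ∫⁻ x, ‖P x‖ₑ ∂ν = ∫⁻ x, ENNReal.ofReal (P x) ∂ν := by
      refine lintegral_congr fun x => ?_
      rw [← ofReal_norm, Real.norm_eq_abs,
        abs_of_nonneg (le_max_right _ _)]
    rw [HasFiniteIntegral, h1]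
    exact lt_of_le_of_lt hmct ENNReal.ofReal_lt_top
  have hintν : Integrable (llr ν π) ν := by
    have hsum : (fun x => llr ν π x) = fun x => P x + min (llr ν π x) 0 := by
      funext x
      simp only [hP_def]
      rcases le_total (llr ν π x) 0 with h | h
      · rw [max_eq_right h, min_eq_left h]; ring
      · rw [max_eq_left h, min_eq_right h]; ring
    rw [show llr ν π = fun x => llr ν π x from rfl, hsum]
    exact hPint.add hwint
  -- pass to the limit
  have htendsto1 : Filter.Tendsto (fun n => ∫ x, a n x ∂ν) Filter.atTop
      (nhds (∫ x, llr ν π x ∂ν)) := by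
    refine tendsto_integral_of_dominated_convergence (fun x => |llr ν π x|)
      (fun n => (ham n).aestronglyMeasurable) hintν.abs ?_ ?_
    · intro n
      refine Filter.Eventually.of_forall fun x => ?_
      rw [Real.norm_eq_abs]
      simp only [ha_def]
      have hn0 : (0:ℝ) ≤ (n:ℝ) := Nat.cast_nonneg n
      rcases le_total (llr ν π x) 0 with h | h
      · rw [min_eq_left (h.trans hn0)]
        have hle : max (llr ν π x) (-(n:ℝ)) ≤ 0 := max_le h (neg_nonpos.mpr hn0)
        rw [abs_of_nonpos hle, abs_of_nonpos h]
        exact neg_le_neg (le_max_left _ _)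
      · have hge : (0:ℝ) ≤ min (llr ν π x) (n:ℝ) := le_min h hn0
        rw [max_eq_left (le_trans (neg_nonpos.mpr hn0) hge), abs_of_nonneg hge,
          abs_of_nonneg h]
        exact min_le_left _ _
    · refine Filter.Eventually.of_forall fun x => ?_
      refine tendsto_atTop_of_eventually_const (i₀ := ⌈|llr ν π x|⌉₊) fun n hn => ?_
      simp only [ha_def]
      have h1 : |llr ν π x| ≤ (n:ℝ) := le_trans (Nat.le_ceil _) (Nat.cast_le.mpr hn)
      rw [min_eq_left (le_trans (le_abs_self _) h1),
        max_eq_left (le_trans (neg_le_neg h1) (neg_abs_le _))]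
  have htendsto2 : Filter.Tendsto
      (fun n : ℕ => (2/q) * (H - 1 + (1 + Real.exp (-(n:ℝ))) ^ (q/2))) Filter.atTop
      (nhds ((2/q) * H)) := by
    have h0 : Filter.Tendsto (fun n : ℕ => Real.exp (-(n:ℝ))) Filter.atTop (nhds 0) :=
      Real.tendsto_exp_neg_atTop_nhds_zero.comp tendsto_natCast_atTop_atTop
    have h1 : Filter.Tendsto (fun n : ℕ => 1 + Real.exp (-(n:ℝ))) Filter.atTop (nhds 1) := by
      have := h0.const_add (1:ℝ)
      simpa using this
    have h2 : Filter.Tendsto (fun n : ℕ => (1 + Real.exp (-(n:ℝ))) ^ (q/2)) Filter.atTop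
        (nhds 1) := by
      have hc : ContinuousAt (fun y : ℝ => y ^ (q/2)) 1 :=
        Real.continuousAt_rpow_const 1 (q/2) (Or.inl one_ne_zero)
      have := hc.tendsto.comp h1
      simpa [Real.one_rpow, Function.comp_def] using this
    have h3 : Filter.Tendsto (fun n : ℕ => H - 1 + (1 + Real.exp (-(n:ℝ))) ^ (q/2))
        Filter.atTop (nhds (H - 1 + 1)) := tendsto_const_nhds.add h2
    have h4 := h3.const_mul (2/q)
    have h5 : H - 1 + 1 = H := by ring
    rw [h5] at h4
    exact h4
  have hfinal : ∫ x, llr ν π x ∂ν ≤ (2/q) * H :=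
    le_of_tendsto_of_tendsto' htendsto1 htendsto2 hkey
  rw [klDiv, if_pos ⟨hνac, hintν⟩, klDiv, if_pos ⟨hac, hintμ⟩]
  calc ENNReal.ofReal (∫ x, llr ν π x ∂ν) ≤ ENNReal.ofReal ((2/q) * H) :=
        ENNReal.ofReal_le_ofReal hfinal
    _ = ENNReal.ofReal (2/q) * ENNReal.ofReal H := ENNReal.ofReal_mul (by positivity)
end

section
/- Let X be a finite nonempty set and π a probability measure on X with π(x) > 0 for all x; set π* = min_x π(x). Let β > 0, ε ∈ (0,1), and let t ≥ (1/(4β))·[log log(1/π*) + log(1/ε²)], assuming π* < 1/e so that log log(1/π*) is well defined. Let T be a Markov transition kernel on X preserving π (πT = π) satisfying the hyper-contractivity estimate: for every nonnegative g : X → ℝ, ‖Tg‖_{L^{1+e^{4βt}}(π)} ≤ ‖g‖_{L^2(π)}. Then for every probability measure μ on X, the total-variation distance satisfies d_TV(μT, π) ≤ ε. -/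
open Finset


private lemma Fderiv {x : ℝ} (hx : 0 < x) :
    HasDerivAt (fun r : ℝ => (r+1) * Real.log r - 2*(r-1))
      (Real.log x + (x+1) * x⁻¹ - 2) x := by
  have h1 : HasDerivAt (fun r : ℝ => (r+1) * Real.log r)
      (1 * Real.log x + (x+1) * x⁻¹) x :=
    (((hasDerivAt_id x).add_const 1)).mul (Real.hasDerivAt_log hx.ne')
  have h2 : HasDerivAt (fun r : ℝ => 2*(r-1)) 2 x := by
    simpa using ((hasDerivAt_id x).sub_const 1).const_mul 2
  have h := h1.sub h2
  rw [one_mul] at h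
  exact h

private lemma F_mono : MonotoneOn (fun r : ℝ => (r+1) * Real.log r - 2*(r-1)) (Set.Ioi 0) := by
  apply monotoneOn_of_hasDerivWithinAt_nonneg (convex_Ioi 0)
    (f' := fun x => Real.log x + (x+1) * x⁻¹ - 2)
  · exact ContinuousOn.sub
      (ContinuousOn.mul (by fun_prop) (Real.continuousOn_log.mono (by
        intro x hx; exact ne_of_gt hx)))
      (by fun_prop)
  · intro x hx
    rw [interior_Ioi] at hx
    exact (Fderiv hx).hasDerivWithinAt
  · intro x hx
    rw [interior_Ioi] at hx
    have h := Real.one_sub_inv_le_log_of_pos hx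
    have hx0 : x ≠ 0 := ne_of_gt hx
    have : (x+1) * x⁻¹ = 1 + x⁻¹ := by field_simp
    rw [this]; linarith

private lemma F_nonneg {r : ℝ} (hr : 1 ≤ r) : 0 ≤ (r+1) * Real.log r - 2*(r-1) := by
  have := F_mono (Set.mem_Ioi.2 one_pos) (Set.mem_Ioi.2 (lt_of_lt_of_le one_pos hr)) hr
  simpa using this

private lemma F_nonpos {r : ℝ} (h0 : 0 < r) (hr : r ≤ 1) :
    (r+1) * Real.log r - 2*(r-1) ≤ 0 := by
  have := F_mono (Set.mem_Ioi.2 h0) (Set.mem_Ioi.2 one_pos) hr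
  simpa using this

private lemma Gderiv {x : ℝ} (hx : 0 < x) :
    HasDerivAt (fun r : ℝ => 2*(r+2)*(r*Real.log r - r + 1) - 3*(r-1)^2)
      (4*((x+1) * Real.log x - 2*(x-1))) x := by
  have hlog : HasDerivAt (fun r : ℝ => r * Real.log r) (1 * Real.log x + x * x⁻¹) x :=
    (hasDerivAt_id x).mul (Real.hasDerivAt_log hx.ne')
  have h1 : HasDerivAt (fun r : ℝ => 2*(r+2)) 2 x := by
    simpa using ((hasDerivAt_id x).add_const 2).const_mul 2
  have h2 : HasDerivAt (fun r : ℝ => r*Real.log r - r + 1)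
      (1 * Real.log x + x * x⁻¹ - 1) x :=
    (hlog.sub (hasDerivAt_id x)).add_const 1
  have h3 := h1.mul h2
  have h4 : HasDerivAt (fun r : ℝ => 3*(r-1)^2) (3*(2*(x-1))) x := by
    simpa using (((hasDerivAt_id x).sub_const 1).pow 2).const_mul 3
  have h5 := h3.sub h4
  refine HasDerivAt.congr_deriv h5 ?_
  have : x * x⁻¹ = 1 := mul_inv_cancel₀ hx.ne'
  rw [this]; ring

private lemma g_nonneg {r : ℝ} (h0 : 0 < r) :
    0 ≤ 2*(r+2)*(r*Real.log r - r + 1) - 3*(r-1)^2 := by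
  set g : ℝ → ℝ := fun r => 2*(r+2)*(r*Real.log r - r + 1) - 3*(r-1)^2 with hg
  have hg1 : g 1 = 0 := by simp [hg]
  have hcont : ∀ s : Set ℝ, s ⊆ Set.Ioi 0 → ContinuousOn g s := by
    intro s hs
    apply ContinuousOn.sub
    · exact ContinuousOn.mul (by fun_prop)
        (ContinuousOn.add (ContinuousOn.sub (ContinuousOn.mul (by fun_prop)
          (Real.continuousOn_log.mono (fun x hx => ne_of_gt (hs hx)))) (by fun_prop))
          (by fun_prop))
    · fun_prop
  rcases le_total 1 r with hr | hr
  · have hmono : MonotoneOn g (Set.Ici 1) := by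
      apply monotoneOn_of_hasDerivWithinAt_nonneg (convex_Ici 1)
        (f' := fun x => 4*((x+1) * Real.log x - 2*(x-1)))
      · exact hcont _ (fun x hx => Set.mem_Ioi.2 (lt_of_lt_of_le one_pos hx))
      · intro x hx
        rw [interior_Ici] at hx
        exact (Gderiv (lt_trans one_pos hx)).hasDerivWithinAt
      · intro x hx
        rw [interior_Ici] at hx
        have := F_nonneg (le_of_lt hx)
        linarith
    have := hmono (Set.mem_Ici.2 le_rfl) (Set.mem_Ici.2 hr) hr
    rw [hg1] at this; exact this
  · have hanti : AntitoneOn g (Set.Icc r 1) := by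
      apply antitoneOn_of_hasDerivWithinAt_nonpos (convex_Icc r 1)
        (f' := fun x => 4*((x+1) * Real.log x - 2*(x-1)))
      · exact hcont _ (fun x hx => lt_of_lt_of_le h0 hx.1)
      · intro x hx
        rw [interior_Icc] at hx
        exact (Gderiv (lt_of_lt_of_le h0 hx.1.le)).hasDerivWithinAt
      · intro x hx
        rw [interior_Icc] at hx
        have := F_nonpos (lt_of_lt_of_le h0 hx.1.le) hx.2.le
        linarith
    have := hanti (Set.mem_Icc.2 ⟨le_rfl, hr⟩) (Set.mem_Icc.2 ⟨hr, le_rfl⟩) hr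
    rw [hg1] at this; exact this

lemma pinsker_pointwise {a b : ℝ} (ha : 0 ≤ a) (hb : 0 < b) :
    3*(a-b)^2 ≤ 2*(a+2*b)*(a * Real.log (a/b) - a + b) := by
  rcases eq_or_lt_of_le ha with h | h
  · simp [← h]; nlinarith
  · have hr : 0 < a / b := div_pos h hb
    have := g_nonneg hr
    have hexp : a / b * Real.log (a/b) - a/b + 1 = (a * Real.log (a/b) - a + b)/b := by
      field_simp
    rw [hexp] at this
    have h2 : 2*(a/b+2) = 2*(a+2*b)/b := by field_simp
    rw [h2] at this
    have h3 : (a/b-1)^2 = (a-b)^2/b^2 := by field_simp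
    rw [h3] at this
    rw [div_mul_div_comm, sub_nonneg] at this
    have hb2 : (0:ℝ) < b^2 := by positivity
    have h4 := mul_le_mul_of_nonneg_right this hb2.le
    calc 3*(a-b)^2 = 3*((a-b)^2/b^2) * b^2 := by field_simp
    _ ≤ 2*(a+2*b)*(a*Real.log (a/b)-a+b)/(b*b) * b^2 := h4
    _ = 2*(a+2*b)*(a*Real.log (a/b)-a+b) := by
      rw [pow_two, div_mul_cancel₀ _ (by positivity : b*b ≠ 0)]

private lemma pinsker_sum {X : Type*} [Fintype X] (a b : X → ℝ) (ha : ∀ y, 0 ≤ a y)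
    (hb : ∀ y, 0 < b y) (hsa : ∑ y, a y = 1) (hsb : ∑ y, b y = 1) :
    (∑ y, |a y - b y|)^2 ≤ 2 * ∑ y, a y * Real.log (a y / b y) := by
  set c : X → ℝ := fun y => a y + 2 * b y with hc
  have hcpos : ∀ y, 0 < c y := fun y => by have := ha y; have := hb y; simp [hc]; linarith
  have hcs : ∑ y, c y = 3 := by
    simp [hc, Finset.sum_add_distrib, ← Finset.mul_sum, hsa, hsb]; norm_num
  have key : (∑ y, |a y - b y|)^2 ≤ (∑ y, c y) * ∑ y, (a y - b y)^2 / c y := by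
    have cs := Finset.sum_mul_sq_le_sq_mul_sq Finset.univ
      (fun y => Real.sqrt (c y)) (fun y => |a y - b y| / Real.sqrt (c y))
    have e1 : ∀ y : X, Real.sqrt (c y) * (|a y - b y| / Real.sqrt (c y)) = |a y - b y| := by
      intro y
      rw [mul_div_cancel₀]
      exact (Real.sqrt_ne_zero'.2 (hcpos y))
    have e2 : ∀ y : X, Real.sqrt (c y) ^ 2 = c y := fun y => Real.sq_sqrt (hcpos y).le
    have e3 : ∀ y : X, (|a y - b y| / Real.sqrt (c y)) ^ 2 = (a y - b y)^2 / c y := by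
      intro y
      rw [div_pow, sq_abs, e2]
    calc (∑ y, |a y - b y|)^2
        = (∑ y, Real.sqrt (c y) * (|a y - b y| / Real.sqrt (c y)))^2 := by
          simp_rw [e1]
      _ ≤ (∑ y, Real.sqrt (c y) ^ 2) * ∑ y, (|a y - b y| / Real.sqrt (c y)) ^ 2 := cs
      _ = (∑ y, c y) * ∑ y, (a y - b y)^2 / c y := by simp_rw [e2, e3]
  have hpt : ∀ y : X, (a y - b y)^2 / c y
      ≤ (2/3) * (a y * Real.log (a y / b y) - a y + b y) := by
    intro y
    rw [div_le_iff₀ (hcpos y)]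
    have := pinsker_pointwise (ha y) (hb y)
    nlinarith [this]
  have hsum2 : ∑ y, (a y - b y)^2 / c y
      ≤ (2/3) * ∑ y, a y * Real.log (a y / b y) := by
    calc ∑ y, (a y - b y)^2 / c y
        ≤ ∑ y, (2/3) * (a y * Real.log (a y / b y) - a y + b y) :=
          Finset.sum_le_sum (fun y _ => hpt y)
      _ = (2/3) * ∑ y, a y * Real.log (a y / b y) := by
          rw [← Finset.mul_sum]
          congr 1
          rw [Finset.sum_add_distrib, Finset.sum_sub_distrib, hsa, hsb]
          ring
  calc (∑ y, |a y - b y|)^2 ≤ (∑ y, c y) * ∑ y, (a y - b y)^2 / c y := key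
    _ ≤ 3 * ((2/3) * ∑ y, a y * Real.log (a y / b y)) := by
        rw [hcs]
        apply mul_le_mul_of_nonneg_left hsum2 (by norm_num)
    _ = 2 * ∑ y, a y * Real.log (a y / b y) := by ring

private lemma entropy_contraction {X : Type*} [Fintype X] [Nonempty X]
    (π : X → ℝ) (hπ_pos : ∀ x, 0 < π x)
    (q : ℝ) (hq : 1 < q)
    (T : X → X → ℝ) (hT_nonneg : ∀ x y, 0 ≤ T x y) (hT_row : ∀ x, ∑ y, T x y = 1)
    (hHCq : ∀ g : X → ℝ, (∀ x, 0 ≤ g x) →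
      (∑ x, |∑ y, g y * T x y| ^ q * π x) ^ (1 / q)
        ≤ (∑ x, |g x| ^ (2 : ℝ) * π x) ^ ((1 : ℝ) / 2))
    (μ' : X → ℝ) (hμ'_pos : ∀ x, 0 < μ' x) (hμ'_sum : ∑ x, μ' x = 1)
    (hν_pos : ∀ y, 0 < ∑ x, μ' x * T x y) :
    (q/2) * (∑ y, (∑ x, μ' x * T x y) * Real.log ((∑ x, μ' x * T x y) / π y))
      ≤ ∑ x, μ' x * Real.log (μ' x / π x) := by
  have hq0 : 0 < q := lt_trans one_pos hq
  set ν : X → ℝ := fun y => ∑ x, μ' x * T x y with hν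
  set h : X → ℝ := fun y => ν y / π y with hh
  have hh_pos : ∀ y, 0 < h y := fun y => div_pos (hν_pos y) (hπ_pos y)
  set sh : X → ℝ := fun y => Real.sqrt (h y) with hsh
  have hsh_pos : ∀ y, 0 < sh y := fun y => Real.sqrt_pos.2 (hh_pos y)
  set m : X → ℝ := fun x => ∑ y, T x y * Real.log (sh y) with hm
  set φ : X → ℝ := fun x => q * m x with hφ
  have hν_sum : ∑ y, ν y = 1 := by
    rw [hν, Finset.sum_comm]
    simp_rw [← Finset.mul_sum, hT_row, mul_one, hμ'_sum]
  -- Jensen for exp via add_one_le_exp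
  have expm_le : ∀ x, Real.exp (m x) ≤ ∑ y, sh y * T x y := by
    intro x
    have hterm : ∀ y : X, Real.exp (m x) * (1 + Real.log (sh y) - m x) * T x y
        ≤ sh y * T x y := by
      intro y
      apply mul_le_mul_of_nonneg_right _ (hT_nonneg x y)
      have h1 : 1 + (Real.log (sh y) - m x) ≤ Real.exp (Real.log (sh y) - m x) := by
        linarith [Real.add_one_le_exp (Real.log (sh y) - m x)]
      have h2 := mul_le_mul_of_nonneg_left h1 (Real.exp_pos (m x)).le
      rw [← Real.exp_add] at h2
      have h3 : m x + (Real.log (sh y) - m x) = Real.log (sh y) := by ring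
      rw [h3, Real.exp_log (hsh_pos y)] at h2
      calc Real.exp (m x) * (1 + Real.log (sh y) - m x)
          = Real.exp (m x) * (1 + (Real.log (sh y) - m x)) := by ring
        _ ≤ sh y := h2
    have e : ∑ y, (1 + Real.log (sh y) - m x) * T x y = 1 := by
      simp_rw [sub_mul, add_mul, one_mul]
      rw [Finset.sum_sub_distrib, Finset.sum_add_distrib, hT_row, ← Finset.mul_sum, hT_row]
      have : ∑ y, Real.log (sh y) * T x y = m x := by
        simp only [hm]
        exact Finset.sum_congr rfl (fun y _ => mul_comm _ _)
      rw [this]; ring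
    calc Real.exp (m x)
        = ∑ y, Real.exp (m x) * ((1 + Real.log (sh y) - m x) * T x y) := by
          rw [← Finset.mul_sum, e, mul_one]
      _ = ∑ y, Real.exp (m x) * (1 + Real.log (sh y) - m x) * T x y := by
          simp_rw [mul_assoc]
      _ ≤ ∑ y, sh y * T x y := Finset.sum_le_sum (fun y _ => hterm y)
  -- hypercontractivity gives A ≤ 1
  have hA1 : ∑ x, (∑ y, sh y * T x y) ^ q * π x ≤ 1 := by
    set A : ℝ := ∑ x, (∑ y, sh y * T x y) ^ q * π x with hA
    have hAnn : 0 ≤ A := Finset.sum_nonneg (fun x _ => mul_nonneg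
      (Real.rpow_nonneg (Finset.sum_nonneg (fun y _ =>
        mul_nonneg (hsh_pos y).le (hT_nonneg x y))) q) (hπ_pos x).le)
    have hrhs : (∑ x, |sh x| ^ (2:ℝ) * π x) = 1 := by
      have : ∀ x : X, |sh x| ^ (2:ℝ) * π x = ν x := by
        intro x
        rw [abs_of_nonneg (hsh_pos x).le,
          show (2:ℝ) = ((2:ℕ):ℝ) by norm_num, Real.rpow_natCast]
        simp only [hsh]
        rw [Real.sq_sqrt (hh_pos x).le]
        simp only [hh]
        rw [div_mul_cancel₀ _ (hπ_pos x).ne']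
      simp_rw [this]; exact hν_sum
    have hhc := hHCq sh (fun x => (hsh_pos x).le)
    rw [hrhs, Real.one_rpow] at hhc
    have habs : ∀ x : X, |∑ y, sh y * T x y| = ∑ y, sh y * T x y := by
      intro x
      exact abs_of_nonneg (Finset.sum_nonneg (fun y _ =>
        mul_nonneg (hsh_pos y).le (hT_nonneg x y)))
    simp_rw [habs] at hhc
    -- hhc : A ^ (1/q) ≤ 1
    by_contra hcon
    push_neg at hcon
    have : (1:ℝ) < A ^ (1/q) :=
      (Real.one_lt_rpow_iff_of_pos (lt_trans one_pos hcon)).2 (Or.inl ⟨hcon, by positivity⟩)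
    exact absurd hhc (not_le.2 this)
  -- S ≤ 1
  have hS1 : ∑ x, π x * Real.exp (φ x) ≤ 1 := by
    refine le_trans (Finset.sum_le_sum (fun x _ => ?_)) hA1
    have e1 : Real.exp (φ x) = Real.exp (m x) ^ q := by
      simp only [hφ]
      rw [mul_comm, Real.exp_mul]
    rw [e1, mul_comm]
    apply mul_le_mul_of_nonneg_right _ (hπ_pos x).le
    exact Real.rpow_le_rpow (Real.exp_pos _).le (expm_le x) hq0.le
  have hS_pos : 0 < ∑ x, π x * Real.exp (φ x) :=
    Finset.sum_pos (fun x _ => mul_pos (hπ_pos x) (Real.exp_pos _)) Finset.univ_nonempty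
  set S : ℝ := ∑ x, π x * Real.exp (φ x) with hSdef
  -- Gibbs inequality
  have gibbs : ∑ x, μ' x * φ x ≤ (∑ x, μ' x * Real.log (μ' x / π x)) + Real.log S := by
    have hpt : ∀ x : X, μ' x * φ x - μ' x * Real.log (μ' x / π x)
        ≤ π x * Real.exp (φ x) / S - μ' x + μ' x * Real.log S := by
      intro x
      have l1 : Real.log (π x * Real.exp (φ x) / (μ' x * S))
          ≤ π x * Real.exp (φ x) / (μ' x * S) - 1 :=
        Real.log_le_sub_one_of_pos (div_pos (mul_pos (hπ_pos x) (Real.exp_pos _))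
          (mul_pos (hμ'_pos x) hS_pos))
      have l2 : Real.log (π x * Real.exp (φ x) / (μ' x * S))
          = Real.log (π x) + φ x - Real.log (μ' x) - Real.log S := by
        rw [Real.log_div (mul_pos (hπ_pos x) (Real.exp_pos _)).ne'
            (mul_pos (hμ'_pos x) hS_pos).ne',
          Real.log_mul (hπ_pos x).ne' (Real.exp_ne_zero _), Real.log_exp,
          Real.log_mul (hμ'_pos x).ne' hS_pos.ne']
        ring
      rw [l2] at l1
      have l3 := mul_le_mul_of_nonneg_left l1 (hμ'_pos x).le
      have l4 : μ' x * (π x * Real.exp (φ x) / (μ' x * S) - 1)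
          = π x * Real.exp (φ x) / S - μ' x := by
        rw [mul_sub, mul_one, mul_div_assoc', mul_div_mul_left _ _ (hμ'_pos x).ne']
      rw [l4] at l3
      have l5 : Real.log (μ' x / π x) = Real.log (μ' x) - Real.log (π x) :=
        Real.log_div (hμ'_pos x).ne' (hπ_pos x).ne'
      rw [l5]
      nlinarith [l3]
    have hsum : ∑ x, (μ' x * φ x - μ' x * Real.log (μ' x / π x))
        ≤ ∑ x, (π x * Real.exp (φ x) / S - μ' x + μ' x * Real.log S) :=
      Finset.sum_le_sum (fun x _ => hpt x)
    rw [Finset.sum_sub_distrib] at hsum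
    have r1 : ∑ x, (π x * Real.exp (φ x) / S - μ' x + μ' x * Real.log S) = Real.log S := by
      rw [Finset.sum_add_distrib, Finset.sum_sub_distrib]
      rw [← Finset.sum_div, ← hSdef, div_self hS_pos.ne', hμ'_sum, ← Finset.sum_mul, hμ'_sum]
      ring
    rw [r1] at hsum
    linarith
  -- Fubini
  have fub : ∑ x, μ' x * φ x = (q/2) * ∑ y, ν y * Real.log (h y) := by
    have e1 : ∀ x : X, μ' x * φ x = ∑ y, (q/2) * (μ' x * T x y * Real.log (h y)) := by
      intro x
      simp only [hφ, hm, hsh, Finset.mul_sum]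
      refine Finset.sum_congr rfl (fun y _ => ?_)
      rw [Real.log_sqrt (hh_pos y).le]
      ring
    calc ∑ x, μ' x * φ x
        = ∑ x, ∑ y, (q/2) * (μ' x * T x y * Real.log (h y)) :=
          Finset.sum_congr rfl (fun x _ => e1 x)
      _ = ∑ y, ∑ x, (q/2) * (μ' x * T x y * Real.log (h y)) := Finset.sum_comm
      _ = (q/2) * ∑ y, ν y * Real.log (h y) := by
          rw [Finset.mul_sum]
          refine Finset.sum_congr rfl (fun y _ => ?_)
          rw [← Finset.mul_sum]
          congr 1
          have : ν y * Real.log (h y) = ∑ x, μ' x * T x y * Real.log (h y) := by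
            simp only [hν]
            rw [Finset.sum_mul]
          rw [this]
  have hlogS : Real.log S ≤ 0 := Real.log_nonpos hS_pos.le hS1
  have key : (q/2) * ∑ y, ν y * Real.log (h y) ≤ ∑ x, μ' x * Real.log (μ' x / π x) := by
    rw [← fub]; linarith
  simp only [hh, hν] at key
  exact key


/-- On a finite state space, hyper-contractivity `‖Tg‖_{1+e^{4βt}} ≤ ‖g‖_2` at time
`t ≥ (1/(4β))[log log(1/π⋆) + log(1/ε²)]` forces total-variation mixing:
`d_TV(μT, π) ≤ ε` for every probability measure `μ`. -/
theorem mixing_time_from_hypercontractivity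
    {X : Type*} [Fintype X] [Nonempty X]
    (π : X → ℝ) (hπ_pos : ∀ x, 0 < π x) (hπ_sum : ∑ x, π x = 1)
    (β ε t : ℝ) (hβ : 0 < β) (hε₀ : 0 < ε) (hε₁ : ε < 1)
    (hπ_star : univ.inf' univ_nonempty π < Real.exp (-1))
    (ht : t ≥ (1 / (4 * β)) *
      (Real.log (Real.log (1 / univ.inf' univ_nonempty π)) + Real.log (1 / ε ^ 2)))
    (T : X → X → ℝ) (hT_nonneg : ∀ x y, 0 ≤ T x y) (hT_row : ∀ x, ∑ y, T x y = 1)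
    (hstat : ∀ y, ∑ x, π x * T x y = π y)
    (hHC : ∀ g : X → ℝ, (∀ x, 0 ≤ g x) →
      (∑ x, |∑ y, g y * T x y| ^ (1 + Real.exp (4 * β * t)) * π x)
          ^ (1 / (1 + Real.exp (4 * β * t)))
        ≤ (∑ x, |g x| ^ (2 : ℝ) * π x) ^ ((1 : ℝ) / 2))
    (μ : X → ℝ) (hμ_nonneg : ∀ x, 0 ≤ μ x) (hμ_sum : ∑ x, μ x = 1) :
    (1 / 2) * ∑ y, |(∑ x, μ x * T x y) - π y| ≤ ε := by
  have hp_pos : 0 < univ.inf' univ_nonempty π :=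
    (Finset.lt_inf'_iff _).2 (fun x _ => hπ_pos x)
  set p : ℝ := univ.inf' univ_nonempty π with hp
  have hp_le : ∀ x, p ≤ π x := fun x => Finset.inf'_le _ (Finset.mem_univ x)
  set L : ℝ := Real.log (1 / p) with hL
  have hL1 : 1 < L := by
    have h1 : Real.log p < Real.log (Real.exp (-1)) := Real.log_lt_log hp_pos hπ_star
    rw [Real.log_exp] at h1
    rw [hL, one_div, Real.log_inv]
    linarith
  have hL0 : 0 < L := lt_trans one_pos hL1
  set q : ℝ := 1 + Real.exp (4 * β * t) with hq
  have hq1 : 1 < q := by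
    rw [hq]; linarith [Real.exp_pos (4 * β * t)]
  have hq0 : 0 < q := lt_trans one_pos hq1
  -- numeric bound : L / q ≤ ε ^ 2
  have hLq : L / q ≤ ε ^ 2 := by
    have hε2 : (0:ℝ) < ε ^ 2 := by positivity
    have h4β : (0:ℝ) < 4 * β := by linarith
    have h1 : Real.log L + Real.log (1 / ε ^ 2) ≤ 4 * β * t := by
      have h2 := mul_le_mul_of_nonneg_left ht h4β.le
      have h3 : 4 * β * ((1 / (4 * β)) *
          (Real.log L + Real.log (1 / ε ^ 2))) =
          Real.log L + Real.log (1 / ε ^ 2) := by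
        field_simp
      rw [h3] at h2
      linarith [h2]
    have h4 : Real.log (L / ε ^ 2) ≤ 4 * β * t := by
      rw [div_eq_mul_one_div, Real.log_mul hL0.ne' (by positivity : (1:ℝ)/ε^2 ≠ 0)]
      exact h1
    have h5 : L / ε ^ 2 ≤ Real.exp (4 * β * t) := by
      calc L / ε ^ 2 = Real.exp (Real.log (L / ε ^ 2)) :=
            (Real.exp_log (by positivity)).symm
        _ ≤ Real.exp (4 * β * t) := Real.exp_le_exp.2 h4
    have h6 : L / ε ^ 2 ≤ q := by rw [hq]; linarith
    calc L / q ≤ L / (L / ε ^ 2) :=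
          div_le_div_of_nonneg_left hL0.le (by positivity) h6
      _ = ε ^ 2 * (L / L) := by
          rw [div_div_eq_mul_div, mul_comm, mul_div_assoc]
      _ = ε ^ 2 := by rw [div_self hL0.ne', mul_one]
  -- the TV distance of the unperturbed chain
  set D : ℝ := (1 / 2) * ∑ y, |(∑ x, μ x * T x y) - π y| with hD
  have hD_nonneg : 0 ≤ D := by
    rw [hD]
    positivity
  -- main claim for the perturbed measure
  have main : ∀ s : ℝ, 0 < s → s < 1 → (1 - s) * D ≤ ε := by
    intro s hs0 hs1
    set μ' : X → ℝ := fun x => (1 - s) * μ x + s * π x with hμ'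
    have hμ'_pos : ∀ x, 0 < μ' x := by
      intro x
      have h1 : 0 ≤ (1 - s) * μ x := mul_nonneg (by linarith) (hμ_nonneg x)
      have h2 : 0 < s * π x := mul_pos hs0 (hπ_pos x)
      rw [hμ']; dsimp only; linarith
    have hμ'_sum : ∑ x, μ' x = 1 := by
      rw [hμ']
      rw [Finset.sum_add_distrib, ← Finset.mul_sum, ← Finset.mul_sum, hμ_sum, hπ_sum]
      ring
    have hν'_eq : ∀ y, ∑ x, μ' x * T x y
        = (1 - s) * (∑ x, μ x * T x y) + s * π y := by
      intro y
      rw [← hstat y, Finset.mul_sum, Finset.mul_sum, ← Finset.sum_add_distrib]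
      refine Finset.sum_congr rfl (fun x _ => ?_)
      rw [hμ']; ring
    have hμT_nonneg : ∀ y, 0 ≤ ∑ x, μ x * T x y := fun y =>
      Finset.sum_nonneg (fun x _ => mul_nonneg (hμ_nonneg x) (hT_nonneg x y))
    have hν'_pos : ∀ y, 0 < ∑ x, μ' x * T x y := by
      intro y
      rw [hν'_eq y]
      have h1 : 0 ≤ (1 - s) * (∑ x, μ x * T x y) :=
        mul_nonneg (by linarith) (hμT_nonneg y)
      have h2 : 0 < s * π y := mul_pos hs0 (hπ_pos y)
      linarith
    have hμT_sum : ∑ y, ∑ x, μ x * T x y = 1 := by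
      rw [Finset.sum_comm]
      simp_rw [← Finset.mul_sum, hT_row, mul_one, hμ_sum]
    have hν'_sum : ∑ y, ∑ x, μ' x * T x y = 1 := by
      simp_rw [hν'_eq]
      rw [Finset.sum_add_distrib, ← Finset.mul_sum, ← Finset.mul_sum, hμT_sum, hπ_sum]
      ring
    -- entropy contraction
    have EC := entropy_contraction π hπ_pos q hq1 T hT_nonneg hT_row
      (fun g hg => hHC g hg) μ' hμ'_pos hμ'_sum hν'_pos
    -- bound the entropy of μ'
    have hHμ' : ∑ x, μ' x * Real.log (μ' x / π x) ≤ L := by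
      have hpt : ∀ x : X, μ' x * Real.log (μ' x / π x) ≤ μ' x * L := by
        intro x
        apply mul_le_mul_of_nonneg_left _ (hμ'_pos x).le
        rw [hL]
        apply Real.log_le_log (div_pos (hμ'_pos x) (hπ_pos x))
        have hμ'le : μ' x ≤ 1 := by
          rw [← hμ'_sum]
          exact Finset.single_le_sum (fun i _ => (hμ'_pos i).le) (Finset.mem_univ x)
        exact div_le_div₀ (by norm_num) hμ'le hp_pos (hp_le x)
      calc ∑ x, μ' x * Real.log (μ' x / π x) ≤ ∑ x, μ' x * L :=
            Finset.sum_le_sum (fun x _ => hpt x)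
        _ = L := by rw [← Finset.sum_mul, hμ'_sum, one_mul]
    -- Pinsker
    have hPk := pinsker_sum (fun y => ∑ x, μ' x * T x y) π
      (fun y => (hν'_pos y).le) hπ_pos hν'_sum hπ_sum
    -- identify |ν' - π| with (1-s)|μT - π|
    have habs : ∀ y : X, |(∑ x, μ' x * T x y) - π y|
        = (1 - s) * |(∑ x, μ x * T x y) - π y| := by
      intro y
      rw [hν'_eq y]
      have : (1 - s) * (∑ x, μ x * T x y) + s * π y - π y
          = (1 - s) * ((∑ x, μ x * T x y) - π y) := by ring
      rw [this, abs_mul, abs_of_nonneg (by linarith : (0:ℝ) ≤ 1 - s)]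
    have hsum_abs : ∑ y, |(∑ x, μ' x * T x y) - π y| = 2 * ((1 - s) * D) := by
      simp_rw [habs]
      rw [← Finset.mul_sum, hD]
      ring
    -- combine
    have hHT : ∑ y, (∑ x, μ' x * T x y) * Real.log ((∑ x, μ' x * T x y) / π y)
        ≤ 2 / q * L := by
      have h2q : 0 < q / 2 := by linarith
      have := EC
      rw [div_mul_eq_mul_div, le_div_iff₀ hq0, mul_comm]
      calc q * (∑ y, (∑ x, μ' x * T x y) * Real.log ((∑ x, μ' x * T x y) / π y))
          = 2 * ((q/2) * ∑ y, (∑ x, μ' x * T x y) *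
              Real.log ((∑ x, μ' x * T x y) / π y)) := by ring
        _ ≤ 2 * L := by
            have := le_trans EC hHμ'
            linarith
    have hfinal : (2 * ((1 - s) * D)) ^ 2 ≤ 4 * ε ^ 2 := by
      calc (2 * ((1 - s) * D)) ^ 2
          = (∑ y, |(∑ x, μ' x * T x y) - π y|) ^ 2 := by rw [hsum_abs]
        _ ≤ 2 * ∑ y, (∑ x, μ' x * T x y) * Real.log ((∑ x, μ' x * T x y) / π y) := hPk
        _ ≤ 2 * (2 / q * L) := by linarith [hHT]
        _ = 4 * (L / q) := by ring
        _ ≤ 4 * ε ^ 2 := by linarith [hLq]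
    have h1sD : 0 ≤ (1 - s) * D := mul_nonneg (by linarith) hD_nonneg
    nlinarith [hfinal, h1sD, hε₀]
  -- remove the perturbation
  by_contra hcon
  push_neg at hcon
  have hD_pos : 0 < D := lt_trans hε₀ hcon
  set s : ℝ := (D - ε) / (2 * D) with hs
  have hs0 : 0 < s := by
    rw [hs]
    apply div_pos (by linarith) (by linarith)
  have hs1 : s < 1 := by
    rw [hs, div_lt_one (by linarith : (0:ℝ) < 2 * D)]
    linarith
  have := main s hs0 hs1
  have hsD : s * D = (D - ε) / 2 := by
    rw [hs]
    field_simp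
  have : (1 - s) * D = D - (D - ε) / 2 := by
    rw [sub_mul, one_mul, hsD]
  linarith [main s hs0 hs1, this]
end
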